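/- arXiv:math/0609514 — 4 statements merged into one kernel-verified Lean document; each statement's English description precedes it below -/
import Mathlib

section
/- (Theorem 3.1, backward part.) Assume (A1). Then for all integers 0 ≤ m ≤ k, all observation sequences y₀,…,yₙ ∈ Y, every initial probability measure ν and all probability measures ν₁, ν₂ on 𝒳, the composed backward smoothing kernels satisfy ‖ν₁ B_{ν,k|n} B_{ν,k−1|n} ⋯ B_{ν,m|n} − ν₂ B_{ν,k|n} B_{ν,k−1|n} ⋯ B_{ν,m|n}‖_TV ≤ ρ^{k−m+1}, where ρ = 1 − σ₋/σ₊. -/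
/- Theorem 3.1 (backward part) of Olsson, Cappé, Douc, Moulines:
geometric forgetting of the composed backward smoothing kernels
`B_{ν,k|n} B_{ν,k−1|n} ⋯ B_{ν,m|n}` under assumption (A1), the total variation
distance being `sup_A |ν₁K(A) − ν₂K(A)|` as in the paper. -/

open MeasureTheory

noncomputable section

variable {X : Type*} [MeasurableSpace X] {Y : Type*}

/-- Unnormalized filter measures: `ufilter … k` is the unnormalized filtering
measure at time `k` (the time-`k` marginal of the unnormalized joint smoothing
distribution `φ_{ν,0:k|k}`). -/
def ufilter (μ : Measure X) (q : X → X → ℝ) (g : X → Y → ℝ) (ys : ℕ → Y) (ν : Measure X) :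
    ℕ → Measure X
  | 0 => ν.withDensity fun x => ENNReal.ofReal (g x (ys 0))
  | k + 1 =>
      μ.withDensity fun x' =>
        ENNReal.ofReal (g x' (ys (k + 1))) *
          ∫⁻ x, ENNReal.ofReal (q x x') ∂(ufilter μ q g ys ν k)

/-- The filter distribution `φ_{ν,k}`, i.e. the time-`k` marginal of the joint
smoothing distribution `φ_{ν,0:k|k}`. -/
def filterDist (μ : Measure X) (q : X → X → ℝ) (g : X → Y → ℝ) (ys : ℕ → Y) (ν : Measure X)
    (k : ℕ) : Measure X :=
  (ufilter μ q g ys ν k Set.univ)⁻¹ • ufilter μ q g ys ν k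

/-- `qpowAux μ q m` is the density `q^{m+1}` (w.r.t. `μ`) of the `(m+1)`-step
transition kernel built from `q`. -/
def qpowAux (μ : Measure X) (q : X → X → ℝ) : ℕ → X → X → ℝ
  | 0 => q
  | m + 1 => fun x x'' => ∫ x', q x x' * qpowAux μ q m x' x'' ∂μ

/-- The backward smoothing kernel `B_{ν,k|n}(x', ·)`:
for `0 ≤ k ≤ n`, `B_{ν,k|n}(x', A) = ∫_A q(x_k, x') φ_{ν,k}(dx_k) / ∫ q(·, x') dφ_{ν,k}`;
for `k > n` it is given by the `q^{k−n}`-extension of the filter as in the paper. -/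
def Bker (μ : Measure X) (q : X → X → ℝ) (g : X → Y → ℝ) (ys : ℕ → Y) (ν : Measure X)
    (n k : ℕ) (x' : X) : Measure X :=
  if k ≤ n then
    (filterDist μ q g ys ν k).withDensity fun xk =>
      ENNReal.ofReal (q xk x' / ∫ z, q z x' ∂(filterDist μ q g ys ν k))
  else
    μ.withDensity fun xk =>
      ENNReal.ofReal
        ((q xk x' * ∫ xn, qpowAux μ q (k - n - 1) xn xk ∂(filterDist μ q g ys ν n)) /
          ∫ xn, qpowAux μ q (k - n) xn x' ∂(filterDist μ q g ys ν n))

/-- `kcompDown K k ν j = ν K_k K_{k-1} ⋯ K_{k-j}` (successive application of the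
kernels with decreasing index, as appropriate for the time-reversed chain). -/
def kcompDown (K : ℕ → X → Measure X) (k : ℕ) (ν : Measure X) : ℕ → Measure X
  | 0 => ν.bind (K k)
  | j + 1 => (kcompDown K k ν j).bind (K (k - j - 1))

/-!
A Markov kernel `K` with `K(x, ·) ≥ ε η` for a fixed probability measure `η` (Doeblin's
condition) contracts total variation by `1 - ε`: `x ↦ K(x, A) - ε η(A)` takes values in
`[0, 1 - ε]`, and by the layer-cake formula the integrals of such a function against two
measures at total variation distance `c` are at most `(1 - ε) c` apart.

Every backward kernel `B_{ν,i|n}` is `x' ↦ q(z, x') π(dz) / ∫ q(z', x') π(dz')` for a finite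
measure `π` (the filter, or for `i > n` the prediction from time `n`), and `σ₋ ≤ q ≤ σ₊` makes
it Doeblin with `ε = σ₋/σ₊` unless `π = 0`, in which case it is the zero kernel. Composing
`k - m + 1` such kernels gives the factor `ρ^(k-m+1)`.
-/
open ProbabilityTheory
open scoped ENNReal NNReal

theorem lintegral_ofReal_le_lintegral_add_of_le_add {α β : Measure X} {c : ℝ≥0∞}
    (h : ∀ s, MeasurableSet s → α s ≤ β s + c) {G : X → ℝ} (hG : Measurable G) (hG0 : 0 ≤ G)
    {M : ℝ} (hGM : ∀ x, G x ≤ M) :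
    ∫⁻ x, ENNReal.ofReal (G x) ∂α ≤ ∫⁻ x, ENNReal.ofReal (G x) ∂β + ENNReal.ofReal M * c := by
  rw [lintegral_eq_lintegral_meas_lt α (.of_forall hG0) hG.aemeasurable,
    lintegral_eq_lintegral_meas_lt β (.of_forall hG0) hG.aemeasurable]
  have hlevel : ∀ t,
      α {x | t < G x} ≤ β {x | t < G x} + (Set.Iio M).indicator (fun _ => c) t := by
    intro t
    by_cases ht : t < M
    · simpa [ht] using h _ (measurableSet_lt measurable_const hG)
    · have : {x | t < G x} = ∅ := Set.eq_empty_of_forall_notMem fun x hx =>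
        ht ((show t < G x from hx).trans_le (hGM x))
      simp [this]
  calc ∫⁻ t in Set.Ioi 0, α {x | t < G x}
      ≤ ∫⁻ t in Set.Ioi 0, (β {x | t < G x} + (Set.Iio M).indicator (fun _ => c) t) :=
        lintegral_mono hlevel
    _ = (∫⁻ t in Set.Ioi 0, β {x | t < G x}) + ENNReal.ofReal M * c := by
        rw [lintegral_add_right _ (measurable_const.indicator measurableSet_Iio),
          lintegral_indicator_const measurableSet_Iio, Measure.restrict_apply measurableSet_Iio,
          Set.inter_comm, Set.Ioi_inter_Iio, Real.volume_Ioo, sub_zero, mul_comm]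

/-- With equal finite masses, `α s ≤ β s + c` for all `s` is symmetric (pass to complements),
so this is the paper's `‖α - β‖_TV = sup_s |α s - β s| ≤ c`. -/
structure TVDistLE (α β : Measure X) (c : ℝ≥0∞) : Prop where
  measure_univ_eq : α Set.univ = β Set.univ
  measure_univ_le_one : α Set.univ ≤ 1
  le_add : ∀ s, MeasurableSet s → α s ≤ β s + c

structure IsDoeblinKernel (K : X → Measure X) (ε : ℝ≥0) : Prop where
  measurable : Measurable K
  isProbabilityMeasure : ∀ x, IsProbabilityMeasure (K x)
  exists_minorant : ∃ η : Measure X, IsProbabilityMeasure η ∧ ∀ x, ε • η ≤ K x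

namespace IsDoeblinKernel
variable {K : X → Measure X} {ε : ℝ≥0}

theorem bind_apply_univ (hK : IsDoeblinKernel K ε) (α : Measure X) :
    (K ∘ₘ α) Set.univ = α Set.univ := by
  have := hK.isProbabilityMeasure
  simp [Measure.bind_apply MeasurableSet.univ hK.measurable.aemeasurable]

theorem bind_apply_le_add (hK : IsDoeblinKernel K ε) {α β : Measure X}
    (hmass : α Set.univ = β Set.univ) {c : ℝ≥0∞} (h : ∀ s, MeasurableSet s → α s ≤ β s + c)
    {A : Set X} (hA : MeasurableSet A) :
    (K ∘ₘ α) A ≤ (K ∘ₘ β) A + ENNReal.ofReal (1 - ε) * c := by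
  obtain ⟨η, hη, hmin⟩ := hK.exists_minorant
  have := hK.isProbabilityMeasure
  set G : X → ℝ := fun x => (K x A).toReal - ε * (η A).toReal
  have hmin' : ∀ x s, MeasurableSet s → ε * (η s).toReal ≤ (K x s).toReal := fun x s hs => by
    simpa using ENNReal.toReal_mono (measure_ne_top _ _) ((Measure.le_iff.mp (hmin x)) s hs)
  have hcompl : ∀ (ρ : Measure X) [IsProbabilityMeasure ρ], (ρ Aᶜ).toReal = 1 - (ρ A).toReal :=
    fun ρ _ => by
      rw [prob_compl_eq_one_sub hA, ENNReal.toReal_sub_of_le prob_le_one ENNReal.one_ne_top,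
        ENNReal.toReal_one]
  have hG0 : 0 ≤ G := fun x => sub_nonneg.mpr (hmin' x A hA)
  have hGM : ∀ x, G x ≤ 1 - ε := fun x => by
    have := hmin' x Aᶜ hA.compl
    rw [hcompl, hcompl] at this
    simp only [G]; nlinarith
  have hG : Measurable G :=
    ((Measure.measurable_coe hA).comp hK.measurable).ennreal_toReal.sub measurable_const
  have hsplit : ∀ x, K x A = ε * η A + ENNReal.ofReal (G x) := fun x => by
    calc K x A = ENNReal.ofReal (ε * (η A).toReal + G x) := by
          simp [G, ENNReal.ofReal_toReal (measure_ne_top _ _)]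
      _ = ε * η A + ENNReal.ofReal (G x) := by
          rw [ENNReal.ofReal_add (by positivity) (hG0 x), ENNReal.ofReal_mul (by positivity),
            ENNReal.ofReal_toReal (measure_ne_top _ _), ENNReal.ofReal_coe_nnreal]
  have hbind : ∀ ρ : Measure X,
      (K ∘ₘ ρ) A = ε * η A * ρ Set.univ + ∫⁻ x, ENNReal.ofReal (G x) ∂ρ := fun ρ => by
    simp_rw [Measure.bind_apply hA hK.measurable.aemeasurable, hsplit]
    rw [lintegral_add_left measurable_const, lintegral_const]
  rw [hbind, hbind, hmass, add_assoc]
  gcongr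
  exact lintegral_ofReal_le_lintegral_add_of_le_add h hG hG0 hGM

end IsDoeblinKernel

namespace TVDistLE
variable {α β : Measure X} {c : ℝ≥0∞}

theorem of_isProbabilityMeasure [IsProbabilityMeasure α] [IsProbabilityMeasure β] :
    TVDistLE α β 1 where
  measure_univ_eq := by simp
  measure_univ_le_one := prob_le_one
  le_add _ _ := prob_le_one.trans le_add_self

theorem bind {K : X → Measure X} {ε : ℝ≥0} (hK : IsDoeblinKernel K ε ∨ K = 0)
    (h : TVDistLE α β c) : TVDistLE (K ∘ₘ α) (K ∘ₘ β) (ENNReal.ofReal (1 - ε) * c) := by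
  rcases hK with hK | rfl
  · exact ⟨by rw [hK.bind_apply_univ, hK.bind_apply_univ, h.measure_univ_eq],
      hK.bind_apply_univ α ▸ h.measure_univ_le_one,
      fun _ hs => hK.bind_apply_le_add h.measure_univ_eq h.le_add hs⟩
  · simp only [Measure.bind_zero_right]
    exact ⟨rfl, by simp, by simp⟩

theorem abs_toReal_sub_le (h : TVDistLE α β c) (h' : TVDistLE β α c) (hc : c ≠ ⊤) {s : Set X}
    (hs : MeasurableSet s) : |(α s).toReal - (β s).toReal| ≤ c.toReal := by
  have hα : α s ≠ ⊤ := ne_top_of_le_ne_top ENNReal.one_ne_top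
    ((measure_mono (Set.subset_univ s)).trans h.measure_univ_le_one)
  have hβ : β s ≠ ⊤ := ne_top_of_le_ne_top ENNReal.one_ne_top
    ((measure_mono (Set.subset_univ s)).trans h'.measure_univ_le_one)
  have h₁ := ENNReal.toReal_mono (ENNReal.add_ne_top.mpr ⟨hβ, hc⟩) (h.le_add s hs)
  have h₂ := ENNReal.toReal_mono (ENNReal.add_ne_top.mpr ⟨hα, hc⟩) (h'.le_add s hs)
  rw [ENNReal.toReal_add hβ hc] at h₁
  rw [ENNReal.toReal_add hα hc] at h₂
  exact abs_sub_le_iff.mpr ⟨by linarith, by linarith⟩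

end TVDistLE

theorem tvDistLE_kcompDown {K : ℕ → X → Measure X} {ε : ℝ≥0}
    (hK : ∀ i, IsDoeblinKernel (K i) ε ∨ K i = 0) (k : ℕ) (ν₁ ν₂ : Measure X)
    [IsProbabilityMeasure ν₁] [IsProbabilityMeasure ν₂] :
    ∀ j, TVDistLE (kcompDown K k ν₁ j) (kcompDown K k ν₂ j) (ENNReal.ofReal (1 - ε) ^ (j + 1))
  | 0 => by simpa [kcompDown] using TVDistLE.of_isProbabilityMeasure.bind (hK k)
  | j + 1 => by
    rw [pow_succ']
    exact (tvDistLE_kcompDown hK k ν₁ ν₂ j).bind (hK _)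

theorem Measurable.integrable_of_nonneg_of_le {μ : Measure X} [IsFiniteMeasure μ] {f : X → ℝ}
    (hf : Measurable f) (h0 : ∀ x, 0 ≤ f x) {C : ℝ} (hC : ∀ x, f x ≤ C) : Integrable f μ :=
  .of_bound hf.aestronglyMeasurable C
    (.of_forall fun x => by rw [Real.norm_of_nonneg (h0 x)]; exact hC x)

section qpowAux
variable (μ : Measure X) {q : X → X → ℝ}

theorem measurable_qpowAux [SFinite μ] (hq : Measurable (Function.uncurry q)) :
    ∀ j, Measurable (Function.uncurry (qpowAux μ q j))
  | 0 => hq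
  | j + 1 => by
    have h : Measurable fun w : (X × X) × X => q w.1.1 w.2 * qpowAux μ q j w.2 w.1.2 :=
      (hq.comp (measurable_fst.fst.prodMk measurable_snd)).mul
        ((measurable_qpowAux hq j).comp (measurable_snd.prodMk measurable_fst.snd))
    exact h.stronglyMeasurable.integral_prod_right'.measurable

theorem measurable_integral_qpowAux [SFinite μ] (φ : Measure X) [SFinite φ]
    (hq : Measurable (Function.uncurry q)) (j : ℕ) :
    Measurable fun y => ∫ x, qpowAux μ q j x y ∂φ :=
  ((measurable_qpowAux μ hq j).comp measurable_swap).stronglyMeasurable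
    |>.integral_prod_right'.measurable

variable [IsProbabilityMeasure μ] {b : ℝ}

theorem qpowAux_nonneg_le (hq0 : ∀ x y, 0 ≤ q x y) (hqb : ∀ x y, q x y ≤ b) :
    ∀ j x y, 0 ≤ qpowAux μ q j x y ∧ qpowAux μ q j x y ≤ b ^ (j + 1)
  | 0, x, y => by simpa [qpowAux] using ⟨hq0 x y, hqb x y⟩
  | j + 1, x, y => by
    have ih := qpowAux_nonneg_le hq0 hqb j
    have hb : 0 ≤ b := (hq0 x y).trans (hqb x y)
    have h0 : ∀ z, 0 ≤ q x z * qpowAux μ q j z y := fun z => mul_nonneg (hq0 x z) (ih z y).1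
    have hle : ∀ z, q x z * qpowAux μ q j z y ≤ b ^ (j + 2) := fun z => by
      rw [pow_succ' b (j + 1)]
      exact mul_le_mul (hqb x z) (ih z y).2 (ih z y).1 hb
    refine ⟨integral_nonneg h0, ?_⟩
    calc qpowAux μ q (j + 1) x y ≤ ‖∫ z, q x z * qpowAux μ q j z y ∂μ‖ := Real.le_norm_self _
      _ ≤ b ^ (j + 2) * μ.real Set.univ := norm_integral_le_of_norm_le_const
          (.of_forall fun z => by rw [Real.norm_of_nonneg (h0 z)]; exact hle z)
      _ = b ^ (j + 1 + 1) := by simp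

theorem qpowAux_succ_eq_integral_mul_right (hq : Measurable (Function.uncurry q))
    (hq0 : ∀ x y, 0 ≤ q x y) (hqb : ∀ x y, q x y ≤ b) :
    ∀ j x y, qpowAux μ q (j + 1) x y = ∫ z, qpowAux μ q j x z * q z y ∂μ
  | 0, x, y => rfl
  | j + 1, x, y => by
    have hbd := qpowAux_nonneg_le μ hq0 hqb
    have hint : Integrable (Function.uncurry fun z w => q x z * (qpowAux μ q j z w * q w y))
        (μ.prod μ) := by
      refine Measurable.integrable_of_nonneg_of_le (C := b * (b ^ (j + 1) * b)) ?_ ?_ ?_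
      · exact (hq.comp (measurable_const.prodMk measurable_fst)).mul
          ((measurable_qpowAux μ hq j).mul (hq.comp (measurable_snd.prodMk measurable_const)))
      · exact fun p => mul_nonneg (hq0 _ _) (mul_nonneg (hbd j _ _).1 (hq0 _ _))
      · have hb : 0 ≤ b := (hq0 x y).trans (hqb x y)
        exact fun p => mul_le_mul (hqb _ _) (mul_le_mul (hbd j _ _).2 (hqb _ _) (hq0 _ _)
          (by positivity)) (mul_nonneg (hbd j _ _).1 (hq0 _ _)) hb
    calc qpowAux μ q (j + 2) x y = ∫ z, ∫ w, q x z * (qpowAux μ q j z w * q w y) ∂μ ∂μ := by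
          simp_rw [integral_const_mul, ← qpowAux_succ_eq_integral_mul_right hq hq0 hqb j]; rfl
      _ = ∫ w, (∫ z, q x z * qpowAux μ q j z w ∂μ) * q w y ∂μ := by
          rw [integral_integral_swap hint]; simp_rw [← integral_mul_const, mul_assoc]
      _ = ∫ w, qpowAux μ q (j + 1) x w * q w y ∂μ := rfl

theorem integral_qpowAux_nonneg_le (φ : Measure X) [IsFiniteMeasure φ]
    (hq0 : ∀ x y, 0 ≤ q x y) (hqb : ∀ x y, q x y ≤ b) (j : ℕ) (y : X) :
    0 ≤ ∫ x, qpowAux μ q j x y ∂φ ∧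
      ∫ x, qpowAux μ q j x y ∂φ ≤ b ^ (j + 1) * φ.real Set.univ := by
  have hbd := qpowAux_nonneg_le μ hq0 hqb j
  refine ⟨integral_nonneg fun x => (hbd x y).1, (Real.le_norm_self _).trans ?_⟩
  exact norm_integral_le_of_norm_le_const
    (.of_forall fun x => by rw [Real.norm_of_nonneg (hbd x y).1]; exact (hbd x y).2)

theorem integral_qpowAux_succ (φ : Measure X) [IsFiniteMeasure φ]
    (hq : Measurable (Function.uncurry q)) (hq0 : ∀ x y, 0 ≤ q x y)
    (hqb : ∀ x y, q x y ≤ b) (j : ℕ) (y : X) :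
    ∫ x, qpowAux μ q (j + 1) x y ∂φ = ∫ z, (∫ x, qpowAux μ q j x z ∂φ) * q z y ∂μ := by
  have hbd := qpowAux_nonneg_le μ hq0 hqb j
  have hb : 0 ≤ b := (hq0 y y).trans (hqb y y)
  have hint : Integrable (Function.uncurry fun x z => qpowAux μ q j x z * q z y) (φ.prod μ) :=
    ((measurable_qpowAux μ hq j).mul (hq.comp (measurable_snd.prodMk measurable_const)))
      |>.integrable_of_nonneg_of_le (fun p => mul_nonneg (hbd _ _).1 (hq0 _ _))
        (fun p => mul_le_mul (hbd _ _).2 (hqb _ _) (hq0 _ _) (by positivity))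
  simp_rw [qpowAux_succ_eq_integral_mul_right μ hq hq0 hqb, integral_integral_swap hint,
    integral_mul_const]

end qpowAux

/-- The backward kernel of a (not necessarily normalized) measure `π`:
`B_{ν,k|n}` is this kernel for `π = φ_{ν,k}`. -/
def backwardKernel (q : X → X → ℝ) (π : Measure X) (x' : X) : Measure X :=
  π.withDensity fun z => ENNReal.ofReal (q z x' / ∫ z', q z' x' ∂π)

section backwardKernel
variable {q : X → X → ℝ} {σm σp : ℝ} (π : Measure X)

theorem measurable_backwardKernel [SFinite π] (hq : Measurable (Function.uncurry q)) :
    Measurable (backwardKernel q π) := by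
  have hC : Measurable fun x' => ∫ z, q z x' ∂π :=
    (hq.comp measurable_swap).stronglyMeasurable.integral_prod_right'.measurable
  have hdens : Measurable (Function.uncurry fun x' z =>
      ENNReal.ofReal (q z x' / ∫ z', q z' x' ∂π)) :=
    ((hq.comp measurable_swap).div (hC.comp measurable_fst)).ennreal_ofReal
  have hK : backwardKernel q π = Kernel.withDensity (Kernel.const X π) fun x' z =>
      ENNReal.ofReal (q z x' / ∫ z', q z' x' ∂π) := funext fun x' => by
    rw [Kernel.withDensity_apply _ hdens, Kernel.const_apply]; rfl
  exact hK ▸ Kernel.measurable _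

theorem isProbabilityMeasure_backwardKernel {x' : X} (hint : Integrable (fun z => q z x') π)
    (hq0 : ∀ z, 0 ≤ q z x') (hC : 0 < ∫ z, q z x' ∂π) :
    IsProbabilityMeasure (backwardKernel q π x') := by
  constructor
  rw [backwardKernel, withDensity_apply _ MeasurableSet.univ, Measure.restrict_univ,
    ← ofReal_integral_eq_lintegral_ofReal (hint.div_const _)
      (.of_forall fun z => div_nonneg (hq0 z) hC.le),
    integral_div, div_self hC.ne', ENNReal.ofReal_one]

/-- The density of `B(x', ·)` with respect to `π` is at least `σm / (σp π(X))`, so the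
normalization of `π` minorizes every `B(x', ·)`. -/
theorem isDoeblinKernel_backwardKernel [IsFiniteMeasure π] [NeZero π]
    (hq : Measurable (Function.uncurry q)) (hσm : 0 < σm)
    (hq_low : ∀ a b, σm ≤ q a b) (hq_up : ∀ a b, q a b ≤ σp) :
    IsDoeblinKernel (backwardKernel q π) (σm / σp).toNNReal := by
  have hm : 0 < π.real Set.univ := measureReal_univ_pos
  have hint : ∀ x', Integrable (fun z => q z x') π := fun x' =>
    (hq.comp (measurable_id.prodMk measurable_const)).integrable_of_nonneg_of_le
      (fun z => hσm.le.trans (hq_low z x')) (fun z => hq_up z x')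
  have hC_le : ∀ x', ∫ z, q z x' ∂π ≤ σp * π.real Set.univ := fun x' => by
    simpa [mul_comm] using integral_mono (hint x') (integrable_const σp) (fun z => hq_up z x')
  have hC_pos : ∀ x', 0 < ∫ z, q z x' ∂π := fun x' => by
    have := integral_mono (integrable_const σm) (hint x') (fun z => hq_low z x')
    simp only [integral_const, smul_eq_mul] at this
    nlinarith
  have hcoef : ((σm / σp).toNNReal : ℝ≥0∞) * (π Set.univ)⁻¹ =
      ENNReal.ofReal (σm / σp / π.real Set.univ) := by
    rw [ENNReal.ofReal_div_of_pos hm, measureReal_def,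
      ENNReal.ofReal_toReal (measure_ne_top _ _), div_eq_mul_inv]
    rfl
  refine ⟨measurable_backwardKernel π hq, fun x' => isProbabilityMeasure_backwardKernel π (hint x')
    (fun z => hσm.le.trans (hq_low z x')) (hC_pos x'), (π Set.univ)⁻¹ • π, inferInstance,
    fun x' => Measure.le_iff.mpr fun s hs => ?_⟩
  calc ((σm / σp).toNNReal • (π Set.univ)⁻¹ • π) s
      = ∫⁻ _ in s, ENNReal.ofReal (σm / σp / π.real Set.univ) ∂π := by
        rw [Measure.smul_apply, Measure.smul_apply, smul_eq_mul, ENNReal.smul_def, smul_eq_mul,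
          ← mul_assoc, hcoef, setLIntegral_const]
    _ ≤ ∫⁻ z in s, ENNReal.ofReal (q z x' / ∫ z', q z' x' ∂π) ∂π := by
        refine lintegral_mono fun z => ENNReal.ofReal_le_ofReal ?_
        rw [div_div]
        exact div_le_div₀ (hσm.le.trans (hq_low z x')) (hq_low z x') (hC_pos x') (hC_le x')
    _ = backwardKernel q π x' s := (withDensity_apply _ hs).symm

theorem isDoeblinKernel_backwardKernel_or_eq_zero [IsFiniteMeasure π]
    (hq : Measurable (Function.uncurry q)) (hσm : 0 < σm)
    (hq_low : ∀ a b, σm ≤ q a b) (hq_up : ∀ a b, q a b ≤ σp) :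
    IsDoeblinKernel (backwardKernel q π) (σm / σp).toNNReal ∨ backwardKernel q π = 0 := by
  rcases eq_zero_or_neZero π with rfl | _
  · exact .inr (funext fun x' => by simp [backwardKernel])
  · exact .inl (isDoeblinKernel_backwardKernel π hq hσm hq_low hq_up)

end backwardKernel

/-- `filterDist` has mass `1` or, when the unnormalized mass is `0` or `∞` (`∞⁻¹ = 0`), mass `0`. -/
instance isFiniteMeasure_filterDist (μ : Measure X) (q : X → X → ℝ) (g : X → Y → ℝ) (ys : ℕ → Y)
    (ν : Measure X) (k : ℕ) : IsFiniteMeasure (filterDist μ q g ys ν k) :=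
  ⟨by simpa [filterDist] using (ENNReal.inv_mul_le_one _).trans_lt ENNReal.one_lt_top⟩

/-- The measure whose backward kernel is `B_{ν,i|n}`: the filter `φ_{ν,i}` for `i ≤ n`, and
for `i > n` the prediction `φ_{ν,n} Q^{i-n}` (up to normalization), given by its `μ`-density. -/
def predictiveMeasure (μ : Measure X) (q : X → X → ℝ) (g : X → Y → ℝ) (ys : ℕ → Y)
    (ν : Measure X) (n i : ℕ) : Measure X :=
  if i ≤ n then filterDist μ q g ys ν i
  else μ.withDensity fun z =>
    ENNReal.ofReal (∫ x, qpowAux μ q (i - n - 1) x z ∂(filterDist μ q g ys ν n))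

section predictiveMeasure
variable (μ : Measure X) [IsProbabilityMeasure μ] {q : X → X → ℝ} {b : ℝ}
  (g : X → Y → ℝ) (ys : ℕ → Y) (ν : Measure X) (n : ℕ)

theorem isFiniteMeasure_predictiveMeasure (hq : Measurable (Function.uncurry q))
    (hq0 : ∀ x y, 0 ≤ q x y) (hqb : ∀ x y, q x y ≤ b) (i : ℕ) :
    IsFiniteMeasure (predictiveMeasure μ q g ys ν n i) := by
  unfold predictiveMeasure
  split_ifs
  · infer_instance
  · have hbd := integral_qpowAux_nonneg_le μ (filterDist μ q g ys ν n) hq0 hqb (i - n - 1)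
    exact isFiniteMeasure_withDensity_ofReal
      ((measurable_integral_qpowAux μ _ hq _).integrable_of_nonneg_of_le (fun z => (hbd z).1)
        (fun z => (hbd z).2)).hasFiniteIntegral

theorem Bker_eq_backwardKernel (hq : Measurable (Function.uncurry q))
    (hq0 : ∀ x y, 0 ≤ q x y) (hqb : ∀ x y, q x y ≤ b) (i : ℕ) :
    Bker μ q g ys ν n i = backwardKernel q (predictiveMeasure μ q g ys ν n i) := by
  funext x'
  by_cases hi : i ≤ n
  · simp only [Bker, predictiveMeasure, if_pos hi, backwardKernel]
  obtain ⟨j, rfl⟩ : ∃ j, i = n + j + 1 := ⟨i - n - 1, by omega⟩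
  simp only [Bker, predictiveMeasure, if_neg hi, backwardKernel,
    show n + j + 1 - n = j + 1 by omega, add_tsub_cancel_right]
  set φ := filterDist μ q g ys ν n
  have hH := measurable_integral_qpowAux μ φ hq j
  have hH0 := fun z => (integral_qpowAux_nonneg_le μ φ hq0 hqb j z).1
  have hD : ∫ z, q z x' ∂(μ.withDensity fun z => ENNReal.ofReal (∫ x, qpowAux μ q j x z ∂φ)) =
      ∫ x, qpowAux μ q (j + 1) x x' ∂φ := by
    rw [integral_withDensity_eq_integral_toReal_smul hH.ennreal_ofReal
      (.of_forall fun _ => ENNReal.ofReal_lt_top), integral_qpowAux_succ μ φ hq hq0 hqb]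
    simp_rw [ENNReal.toReal_ofReal (hH0 _), smul_eq_mul]
  rw [hD, ← withDensity_mul _ hH.ennreal_ofReal]
  · congr 1
    funext z
    rw [Pi.mul_apply, ← ENNReal.ofReal_mul (hH0 z), mul_div_assoc', mul_comm]
  · exact ((hq.comp (measurable_id.prodMk measurable_const)).div_const _).ennreal_ofReal

end predictiveMeasure

theorem backward_smoothing_kernel_forgetting_general
    (μ : Measure X) [IsProbabilityMeasure μ]
    (q : X → X → ℝ) (g : X → Y → ℝ) (ys : ℕ → Y) (n : ℕ)
    (σm σp : ℝ)
    (hσm : 0 < σm)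
    (hq_meas : Measurable (Function.uncurry q))
    (hq_low : ∀ a b, σm ≤ q a b) (hq_up : ∀ a b, q a b ≤ σp)
    (ν : Measure X)
    (m k : ℕ)
    (ν₁ ν₂ : Measure X) [IsProbabilityMeasure ν₁] [IsProbabilityMeasure ν₂]
    (A : Set X) (hA : MeasurableSet A) :
    |(kcompDown (Bker μ q g ys ν n) k ν₁ (k - m) A).toReal -
        (kcompDown (Bker μ q g ys ν n) k ν₂ (k - m) A).toReal| ≤
      (1 - σm / σp) ^ (k - m + 1) := by
  obtain ⟨x₀⟩ := nonempty_of_isProbabilityMeasure μ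
  have hσp : 0 < σp := hσm.trans_le ((hq_low x₀ x₀).trans (hq_up x₀ x₀))
  have hε : ((σm / σp).toNNReal : ℝ) = σm / σp := Real.coe_toNNReal _ (by positivity)
  have hε_le : σm / σp ≤ 1 := (div_le_one hσp).mpr ((hq_low x₀ x₀).trans (hq_up x₀ x₀))
  have hq0 : ∀ a b, 0 ≤ q a b := fun a b => hσm.le.trans (hq_low a b)
  have hK : ∀ i, IsDoeblinKernel (Bker μ q g ys ν n i) (σm / σp).toNNReal ∨
      Bker μ q g ys ν n i = 0 := fun i => by
    have := isFiniteMeasure_predictiveMeasure μ g ys ν n hq_meas hq0 hq_up i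
    rw [Bker_eq_backwardKernel μ g ys ν n hq_meas hq0 hq_up]
    exact isDoeblinKernel_backwardKernel_or_eq_zero _ hq_meas hσm hq_low hq_up
  have h := (tvDistLE_kcompDown hK k ν₁ ν₂ (k - m)).abs_toReal_sub_le
    (tvDistLE_kcompDown hK k ν₂ ν₁ (k - m)) (by simp) hA
  rwa [ENNReal.toReal_pow, ENNReal.toReal_ofReal (by linarith), hε] at h

/-- **Theorem 3.1, backward part.** Assume (A1). Then for all `0 ≤ m ≤ k`, all
observations, every initial distribution `ν` and all probability measures
`ν₁, ν₂`, `‖ν₁ B_{ν,k|n} ⋯ B_{ν,m|n} − ν₂ B_{ν,k|n} ⋯ B_{ν,m|n}‖_TV ≤ ρ^(k−m+1)`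
with `ρ = 1 − σ₋/σ₊`. -/
theorem backward_smoothing_kernel_forgetting
    (μ : Measure X) [IsProbabilityMeasure μ]
    (q : X → X → ℝ) (g : X → Y → ℝ) (ys : ℕ → Y) (n : ℕ)
    (σm σp : ℝ)
    (hσm : 0 < σm)
    (hq_meas : Measurable (Function.uncurry q))
    (hq_low : ∀ a b, σm ≤ q a b) (hq_up : ∀ a b, q a b ≤ σp)
    (hg_meas : ∀ yv, Measurable fun x => g x yv)
    (hg_nonneg : ∀ x yv, 0 ≤ g x yv)
    (hg_bdd : ∀ yv, ∃ C, ∀ x, g x yv ≤ C)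
    (hg_pos : ∀ yv, 0 < ∫ x, g x yv ∂μ)
    (ν : Measure X) [IsProbabilityMeasure ν]
    (m k : ℕ) (hmk : m ≤ k)
    (ν₁ ν₂ : Measure X) [IsProbabilityMeasure ν₁] [IsProbabilityMeasure ν₂]
    (A : Set X) (hA : MeasurableSet A) :
    |(kcompDown (Bker μ q g ys ν n) k ν₁ (k - m) A).toReal -
        (kcompDown (Bker μ q g ys ν n) k ν₂ (k - m) A).toReal| ≤
      (1 - σm / σp) ^ (k - m + 1) :=
  backward_smoothing_kernel_forgetting_general μ q g ys n σm σp hσm hq_meas hq_low hq_up ν m k ν₁ ν₂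
    A hA

end
end

section
/- (Lemma A.3.) Assume (A1). Let 0 ≤ i ≤ n and let f be a bounded measurable function on X^{n+1} which depends only on the coordinates (x_i, …, x_n). For 0 ≤ k ≤ n and a fixed reference point x̂_{0:k} ∈ X^{k+1}, define Ψ_{k,n}[f](x_{0:k}) := L_k⋯L_{n−1} f(x_{0:k}) / L_k⋯L_{n−1}(x_{0:k}, X^{n+1}) − L_k⋯L_{n−1} f(x̂_{0:k}) / L_k⋯L_{n−1}(x̂_{0:k}, X^{n+1}). Then sup_{x_{0:k} ∈ X^{k+1}} |Ψ_{k,n}[f](x_{0:k})| ≤ 2 ρ^{max(i−k, 0)} ‖f‖_∞, where ‖f‖_∞ is the supremum norm and ρ = 1 − σ₋/σ₊. -/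
/- Downward induction on `k`. For `k ≥ i` each normalized mean is bounded by `‖f‖_∞`. For `k < i`,
integrating out `x_{k+1}` exhibits the normalized mean at `x_{0:k}` as the mean of
`h(u) = L_{k+1}⋯L_{n-1}f / L_{k+1}⋯L_{n-1}1` at `(x_{0:k}, u)` against the weight `q(x_k, u) w(u)`;
as `f` ignores the coordinates below `i`, neither `w` nor `h` depends on `x_{0:k}`. Both tilted
weights, once normalized, dominate `σ₋/σ₊` times the normalized `w`, so (Doeblin) their means of
`h` differ by at most `ρ` times the oscillation of `h`, which the induction hypothesis bounds. -/

open MeasureTheory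

noncomputable section

variable {X : Type*} [MeasurableSpace X] {Y : Type*}

/-- `LF μ q g ys n m f x` is the iterated unnormalized smoothing operator
`(L_{n-m} ⋯ L_{n-1} f)(x_{0:n-m})`, paths being represented as elements of `ℕ → X`. -/
def LF (μ : Measure X) (q : X → X → ℝ) (g : X → Y → ℝ) (ys : ℕ → Y) (n : ℕ) :
    ℕ → ((ℕ → X) → ℝ) → (ℕ → X) → ℝ
  | 0, f, x => f x
  | m + 1, f, x =>
      ∫ x', g x' (ys (n - m)) * q (x (n - m - 1)) x' *
        LF μ q g ys n m f (Function.update x (n - m) x') ∂μ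

/-- `Psi μ q g ys n k xhat f = Ψ_{k,n}[f]`, with reference point `xhat`. -/
def Psi (μ : Measure X) (q : X → X → ℝ) (g : X → Y → ℝ) (ys : ℕ → Y) (n k : ℕ)
    (xhat : ℕ → X) (f : (ℕ → X) → ℝ) (x : ℕ → X) : ℝ :=
  LF μ q g ys n (n - k) f x / LF μ q g ys n (n - k) (fun _ => 1) x -
    LF μ q g ys n (n - k) f xhat / LF μ q g ys n (n - k) (fun _ => 1) xhat

open Function Set

lemma exists_forall_abs_sub_le_half {ι : Type*} {h : ι → ℝ} {D : ℝ}
    (hD : ∀ u v, |h u - h v| ≤ D) : ∃ c, ∀ u, |h u - c| ≤ D / 2 := by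
  rcases isEmpty_or_nonempty ι with hι | hι
  · exact ⟨0, fun u => isEmptyElim u⟩
  obtain ⟨u₀⟩ := id hι
  have hD' : ∀ u v, h u ≤ h v + D := fun u v => by linarith [(abs_le.1 (hD u v)).2]
  have hbdd_above : BddAbove (range h) := ⟨h u₀ + D, by rintro _ ⟨u, rfl⟩; exact hD' u u₀⟩
  have hbdd_below : BddBelow (range h) := ⟨h u₀ - D, by rintro _ ⟨u, rfl⟩; linarith [hD' u₀ u]⟩
  have hosc : ⨆ u, h u ≤ (⨅ u, h u) + D :=
    ciSup_le fun u => sub_le_iff_le_add.1 (le_ciInf fun v => by linarith [hD' u v])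
  refine ⟨((⨆ u, h u) + ⨅ u, h u) / 2, fun u => abs_le.2 ⟨?_, ?_⟩⟩ <;>
    linarith [le_ciSup hbdd_above u, ciInf_le hbdd_below u]

section WeightedIntegrals

variable {μ : Measure X}

lemma abs_integral_mul_sub_const_le {V h : X → ℝ} {c δ : ℝ} (hV : Integrable V μ) (hV0 : 0 ≤ V)
    (hc : ∀ u, |h u - c| ≤ δ) : |∫ u, V u * (h u - c) ∂μ| ≤ δ * ∫ u, V u ∂μ := by
  rw [← Real.norm_eq_abs, ← integral_const_mul]
  refine norm_integral_le_of_norm_le (hV.const_mul δ) (ae_of_all _ fun u => ?_)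
  rw [Real.norm_eq_abs, abs_mul, abs_of_nonneg (hV0 u), mul_comm]
  exact mul_le_mul_of_nonneg_right (hc u) (hV0 u)

lemma integral_mul_eq_integral_mul_sub_const_add {V h : X → ℝ} {c δ : ℝ} (hV : Integrable V μ)
    (hh : AEStronglyMeasurable h μ) (hc : ∀ u, |h u - c| ≤ δ) :
    ∫ u, V u * h u ∂μ = ∫ u, V u * (h u - c) ∂μ + c * ∫ u, V u ∂μ := by
  have hint : Integrable (fun u => V u * (h u - c)) μ :=
    hV.mul_bdd (hh.sub aestronglyMeasurable_const) (ae_of_all _ hc)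
  rw [← integral_const_mul, ← integral_add hint (hV.const_mul c)]
  exact integral_congr_ae (ae_of_all _ fun u => by ring)

lemma abs_integral_mul_sub_integral_mul_le {W W' h : X → ℝ} {c δ : ℝ}
    (hW : Integrable W μ) (hW' : Integrable W' μ) (hW0 : 0 ≤ W) (hW'0 : 0 ≤ W')
    (hmass : ∫ u, W u ∂μ = ∫ u, W' u ∂μ) (hh : AEStronglyMeasurable h μ)
    (hc : ∀ u, |h u - c| ≤ δ) :
    |∫ u, W u * h u ∂μ - ∫ u, W' u * h u ∂μ| ≤ 2 * δ * ∫ u, W u ∂μ := by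
  rw [integral_mul_eq_integral_mul_sub_const_add hW hh hc,
    integral_mul_eq_integral_mul_sub_const_add hW' hh hc, hmass, add_sub_add_right_eq_sub]
  have h₁ := abs_integral_mul_sub_const_le hW hW0 hc
  have h₂ := abs_integral_mul_sub_const_le hW' hW'0 hc
  rw [hmass] at h₁
  linarith [abs_sub (∫ u, W u * (h u - c) ∂μ) (∫ u, W' u * (h u - c) ∂μ)]

/-- The residual of `α w / ∫ α w` after removing the common minorant `(σm / σp) w / ∫ w`. -/
lemma exists_residual_weight {α w h : X → ℝ} {σm σp C : ℝ} (hσm : 0 < σm)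
    (hα : AEStronglyMeasurable α μ) (hα_mem : ∀ u, α u ∈ Icc σm σp)
    (hw : Integrable w μ) (hw0 : 0 ≤ w) (hw_pos : 0 < ∫ u, w u ∂μ)
    (hh : AEStronglyMeasurable h μ) (hC : ∀ u, |h u| ≤ C) :
    ∃ W : X → ℝ, Integrable W μ ∧ 0 ≤ W ∧ ∫ u, W u ∂μ = 1 - σm / σp ∧
      ∫ u, W u * h u ∂μ = (∫ u, α u * w u * h u ∂μ) / (∫ u, α u * w u ∂μ) -
        σm / σp * ((∫ u, w u * h u ∂μ) / ∫ u, w u ∂μ) := by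
  set Iw := ∫ u, w u ∂μ
  set Iα := ∫ u, α u * w u ∂μ
  have hα_bdd : ∀ᵐ u ∂μ, ‖α u‖ ≤ σp := ae_of_all _ fun u => by
    rw [Real.norm_eq_abs, abs_of_pos (hσm.trans_le (hα_mem u).1)]
    exact (hα_mem u).2
  have hh_bdd : ∀ᵐ u ∂μ, ‖h u‖ ≤ C := ae_of_all _ hC
  have hαw : Integrable (fun u => α u * w u) μ := hw.bdd_mul hα hα_bdd
  have hIα_ge : σm * Iw ≤ Iα := by
    rw [← integral_const_mul]
    exact integral_mono (hw.const_mul σm) hαw fun u =>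
      mul_le_mul_of_nonneg_right (hα_mem u).1 (hw0 u)
  have hIα_le : Iα ≤ σp * Iw := by
    rw [← integral_const_mul]
    exact integral_mono hαw (hw.const_mul σp) fun u =>
      mul_le_mul_of_nonneg_right (hα_mem u).2 (hw0 u)
  have hIα : 0 < Iα := (mul_pos hσm hw_pos).trans_le hIα_ge
  have hσp : 0 < σp := pos_of_mul_pos_left (hIα.trans_le hIα_le) hw_pos.le
  refine ⟨fun u => Iα⁻¹ * (α u * w u) - σm / σp * Iw⁻¹ * w u,
    (hαw.const_mul _).sub (hw.const_mul _), fun u => ?_, ?_, ?_⟩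
  · have hcoef : σm / σp * Iw⁻¹ ≤ Iα⁻¹ * α u :=
      calc σm / σp * Iw⁻¹ = σm / (σp * Iw) := by field_simp
        _ ≤ σm / Iα := div_le_div_of_nonneg_left hσm.le hIα hIα_le
        _ ≤ α u / Iα := div_le_div_of_nonneg_right (hα_mem u).1 hIα.le
        _ = Iα⁻¹ * α u := div_eq_inv_mul _ _
    have := mul_le_mul_of_nonneg_right hcoef (hw0 u)
    simp only [Pi.zero_apply, sub_nonneg]
    linarith [mul_assoc Iα⁻¹ (α u) (w u)]
  · rw [integral_sub (hαw.const_mul _) (hw.const_mul _), integral_const_mul, integral_const_mul]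
    change Iα⁻¹ * Iα - σm / σp * Iw⁻¹ * Iw = _
    field_simp
  · calc ∫ u, (Iα⁻¹ * (α u * w u) - σm / σp * Iw⁻¹ * w u) * h u ∂μ
        = ∫ u, (Iα⁻¹ * (α u * w u * h u) - σm / σp * Iw⁻¹ * (w u * h u)) ∂μ :=
          integral_congr_ae (ae_of_all _ fun u => by ring)
      _ = _ := by
          rw [integral_sub ((hαw.mul_bdd hh hh_bdd).const_mul _)
            ((hw.mul_bdd hh hh_bdd).const_mul _), integral_const_mul, integral_const_mul]
          ring

lemma abs_integral_div_sub_integral_div_le {α α' w h : X → ℝ} {σm σp D : ℝ} (hσm : 0 < σm)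
    (hα : AEStronglyMeasurable α μ) (hα' : AEStronglyMeasurable α' μ)
    (hα_mem : ∀ u, α u ∈ Icc σm σp) (hα'_mem : ∀ u, α' u ∈ Icc σm σp)
    (hw : Integrable w μ) (hw0 : 0 ≤ w) (hw_pos : 0 < ∫ u, w u ∂μ)
    (hh : AEStronglyMeasurable h μ) (hD : ∀ u v, |h u - h v| ≤ D) :
    |(∫ u, α u * w u * h u ∂μ) / (∫ u, α u * w u ∂μ) -
      (∫ u, α' u * w u * h u ∂μ) / (∫ u, α' u * w u ∂μ)| ≤ (1 - σm / σp) * D := by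
  obtain ⟨c, hc⟩ := exists_forall_abs_sub_le_half hD
  have hC : ∀ u, |h u| ≤ |c| + D / 2 := fun u => by
    linarith [hc u, abs_sub_abs_le_abs_sub (h u) c]
  obtain ⟨W, hW, hW0, hW_mass, hWh⟩ :=
    exists_residual_weight hσm hα hα_mem hw hw0 hw_pos hh hC
  obtain ⟨W', hW', hW'0, hW'_mass, hW'h⟩ :=
    exists_residual_weight hσm hα' hα'_mem hw hw0 hw_pos hh hC
  have key := abs_integral_mul_sub_integral_mul_le hW hW' hW0 hW'0
    (hW_mass.trans hW'_mass.symm) hh hc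
  rw [hWh, hW'h, hW_mass, sub_sub_sub_cancel_right] at key
  linarith

end WeightedIntegrals

/-- Assumption (A1), with `σm, σp` standing for `σ₋, σ₊`. -/
structure IsStronglyMixing (μ : Measure X) (q : X → X → ℝ) (g : X → Y → ℝ) (σm σp : ℝ) :
    Prop where
  pos : 0 < σm
  measurable_q : Measurable (uncurry q)
  le_q : ∀ a b, σm ≤ q a b
  q_le : ∀ a b, q a b ≤ σp
  measurable_g : ∀ y, Measurable fun x => g x y
  g_nonneg : ∀ x y, 0 ≤ g x y
  bddAbove_g : ∀ y, ∃ C, ∀ x, g x y ≤ C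
  integral_g_pos : ∀ y, 0 < ∫ x, g x y ∂μ

section LF

variable {μ : Measure X} {q : X → X → ℝ} {g : X → Y → ℝ} {ys : ℕ → Y} {n : ℕ}
  {f : (ℕ → X) → ℝ}

lemma LF_succ (m : ℕ) (x : ℕ → X) :
    LF μ q g ys n (m + 1) f x = ∫ u, q (x (n - m - 1)) u *
      (g u (ys (n - m)) * LF μ q g ys n m f (update x (n - m) u)) ∂μ :=
  integral_congr_ae (ae_of_all _ fun u => by ring)

lemma measurable_LF [SFinite μ] (hq : Measurable (uncurry q))
    (hg : ∀ y, Measurable fun x => g x y) (hf : Measurable f) (m : ℕ) :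
    Measurable (LF μ q g ys n m f) := by
  induction m with
  | zero => exact hf
  | succ m ih =>
    have hintegrand : Measurable fun p : (ℕ → X) × X => g p.2 (ys (n - m)) *
        q (p.1 (n - m - 1)) p.2 * LF μ q g ys n m f (update p.1 (n - m) p.2) := by
      fun_prop
    exact hintegrand.stronglyMeasurable.integral_prod_right'.measurable

lemma exists_abs_LF_le [IsFiniteMeasure μ] {Q : ℝ} (hq : ∀ a b, |q a b| ≤ Q)
    (hg : ∀ y, ∃ C, ∀ x, |g x y| ≤ C) (hf : ∃ C, ∀ x, |f x| ≤ C) (m : ℕ) :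
    ∃ C, ∀ x, |LF μ q g ys n m f x| ≤ C := by
  induction m with
  | zero => exact hf
  | succ m ih =>
    obtain ⟨B, hB⟩ := ih
    obtain ⟨G, hG⟩ := hg (ys (n - m))
    refine ⟨Q * (G * B) * μ.real univ, fun x => ?_⟩
    rw [LF_succ, ← Real.norm_eq_abs]
    refine norm_integral_le_of_norm_le_const (ae_of_all _ fun u => ?_)
    have hG0 : 0 ≤ G := (abs_nonneg _).trans (hG u)
    rw [Real.norm_eq_abs, abs_mul, abs_mul]
    exact mul_le_mul (hq _ _) (mul_le_mul (hG u) (hB _) (abs_nonneg _) hG0)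
      (by positivity) ((abs_nonneg _).trans (hq u u))

lemma LF_congr {i : ℕ} (hf : ∀ x x' : ℕ → X, (∀ j, i ≤ j → j ≤ n → x j = x' j) → f x = f x')
    (m : ℕ) {x x' : ℕ → X} (hxx' : ∀ j, i ≤ j → j ≤ n - m → x j = x' j)
    (hm : x (n - m) = x' (n - m)) : LF μ q g ys n m f x = LF μ q g ys n m f x' := by
  induction m generalizing x x' with
  | zero => exact hf x x' hxx'
  | succ m ih =>
    have hprev : x (n - m - 1) = x' (n - m - 1) := by rwa [Nat.sub_sub]
    rw [LF_succ, LF_succ, hprev]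
    refine integral_congr_ae (ae_of_all _ fun u => ?_)
    dsimp only
    congr 2
    refine ih (fun j hij hjm => ?_) (by simp)
    rcases eq_or_ne j (n - m) with rfl | hj
    · simp
    · simpa [update_of_ne hj] using hxx' j hij (by omega)

end LF

namespace IsStronglyMixing

variable {μ : Measure X} {q : X → X → ℝ} {g : X → Y → ℝ} {σm σp : ℝ} {ys : ℕ → Y} {n : ℕ}
  {f : (ℕ → X) → ℝ}

lemma q_pos (hA : IsStronglyMixing μ q g σm σp) (a b : X) : 0 < q a b :=
  hA.pos.trans_le (hA.le_q a b)

lemma abs_q_le (hA : IsStronglyMixing μ q g σm σp) (a b : X) : |q a b| ≤ σp := by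
  rw [abs_of_pos (hA.q_pos a b)]
  exact hA.q_le a b

lemma exists_abs_g_le (hA : IsStronglyMixing μ q g σm σp) (y : Y) : ∃ C, ∀ x, |g x y| ≤ C :=
  (hA.bddAbove_g y).imp fun _ hC x => (abs_of_nonneg (hA.g_nonneg x y)).trans_le (hC x)

lemma integral_pos_of_g_pos_imp_pos (hA : IsStronglyMixing μ q g σm σp) [IsFiniteMeasure μ]
    {V : X → ℝ} (hV : Integrable V μ) (hV0 : 0 ≤ V) (y : Y) (hV_pos : ∀ u, 0 < g u y → 0 < V u) :
    0 < ∫ u, V u ∂μ := by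
  obtain ⟨C, hC⟩ := hA.exists_abs_g_le y
  have hg_int : Integrable (fun u => g u y) μ :=
    .of_bound (hA.measurable_g y).aestronglyMeasurable C (ae_of_all _ hC)
  have hg_supp := (integral_pos_iff_support_of_nonneg (fun u => hA.g_nonneg u y) hg_int).1
    (hA.integral_g_pos y)
  refine (integral_pos_iff_support_of_nonneg hV0 hV).2 (hg_supp.trans_le (measure_mono ?_))
  intro u hu
  exact (hV_pos u ((hA.g_nonneg u y).lt_of_ne' hu)).ne'

lemma integrable_g_mul_LF_one (hA : IsStronglyMixing μ q g σm σp) [IsFiniteMeasure μ]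
    (m : ℕ) (y : Y) (x : ℕ → X) (j : ℕ) :
    Integrable (fun u => g u y * LF μ q g ys n m (fun _ => 1) (update x j u)) μ := by
  obtain ⟨C, hC⟩ := hA.exists_abs_g_le y
  obtain ⟨B, hB⟩ := exists_abs_LF_le (μ := μ) (ys := ys) (n := n) hA.abs_q_le hA.exists_abs_g_le
    ⟨1, fun _ => abs_one.le⟩ m
  refine Integrable.of_bound ?_ (C * B) (ae_of_all _ fun u => ?_)
  · exact ((hA.measurable_g y).mul ((measurable_LF hA.measurable_q hA.measurable_g
      measurable_const m).comp (measurable_update x))).aestronglyMeasurable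
  · rw [Real.norm_eq_abs, abs_mul]
    exact mul_le_mul (hC u) (hB _) (abs_nonneg _) ((abs_nonneg _).trans (hC u))

lemma integrable_q_mul (hA : IsStronglyMixing μ q g σm σp) {F : X → ℝ} (hF : Integrable F μ)
    (a : X) : Integrable (fun u => q a u * F u) μ :=
  hF.bdd_mul hA.measurable_q.of_uncurry_left.aestronglyMeasurable
    (ae_of_all _ fun u => hA.abs_q_le a u)

lemma LF_one_pos (hA : IsStronglyMixing μ q g σm σp) [IsFiniteMeasure μ] (m : ℕ) (x : ℕ → X) :
    0 < LF μ q g ys n m (fun _ => 1) x := by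
  induction m generalizing x with
  | zero => exact one_pos
  | succ m ih =>
    rw [LF_succ]
    exact hA.integral_pos_of_g_pos_imp_pos
      (hA.integrable_q_mul (hA.integrable_g_mul_LF_one m _ x _) _)
      (fun u => mul_nonneg (hA.q_pos _ _).le (mul_nonneg (hA.g_nonneg _ _) (ih _).le)) _
      (fun u hu => mul_pos (hA.q_pos _ _) (mul_pos hu (ih _)))

lemma abs_LF_le (hA : IsStronglyMixing μ q g σm σp) [IsFiniteMeasure μ] {C : ℝ}
    (hC : ∀ x, |f x| ≤ C) (m : ℕ) (x : ℕ → X) :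
    |LF μ q g ys n m f x| ≤ C * LF μ q g ys n m (fun _ => 1) x := by
  induction m generalizing x with
  | zero => simpa [LF] using hC x
  | succ m ih =>
    rw [LF_succ, LF_succ, ← integral_const_mul, ← Real.norm_eq_abs]
    refine norm_integral_le_of_norm_le
      ((hA.integrable_q_mul (hA.integrable_g_mul_LF_one m _ x _) _).const_mul C)
      (ae_of_all _ fun u => ?_)
    have hqg : 0 ≤ q (x (n - m - 1)) u * g u (ys (n - m)) :=
      mul_nonneg (hA.q_pos _ _).le (hA.g_nonneg _ _)
    rw [Real.norm_eq_abs, ← mul_assoc, abs_mul, abs_of_nonneg hqg]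
    calc _ ≤ q (x (n - m - 1)) u * g u (ys (n - m)) *
          (C * LF μ q g ys n m (fun _ => 1) (update x (n - m) u)) :=
          mul_le_mul_of_nonneg_left (ih _) hqg
      _ = _ := by ring

lemma abs_LF_div_LF_one_le (hA : IsStronglyMixing μ q g σm σp) [IsFiniteMeasure μ] {C : ℝ}
    (hC : ∀ x, |f x| ≤ C) (m : ℕ) (x : ℕ → X) :
    |LF μ q g ys n m f x / LF μ q g ys n m (fun _ => 1) x| ≤ C := by
  rw [abs_div, abs_of_pos (hA.LF_one_pos m x), div_le_iff₀ (hA.LF_one_pos m x)]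
  exact hA.abs_LF_le hC m x

lemma abs_Psi_le_two_mul (hA : IsStronglyMixing μ q g σm σp) [IsFiniteMeasure μ] {C : ℝ}
    (hC : ∀ x, |f x| ≤ C) (k : ℕ) (xhat x : ℕ → X) :
    |Psi μ q g ys n k xhat f x| ≤ 2 * C := by
  rw [Psi, two_mul]
  exact (abs_sub _ _).trans
    (add_le_add (hA.abs_LF_div_LF_one_le hC _ x) (hA.abs_LF_div_LF_one_le hC _ xhat))

lemma LF_succ_div_eq (hA : IsStronglyMixing μ q g σm σp) [IsFiniteMeasure μ] {m : ℕ}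
    {x : ℕ → X} {w h : X → ℝ}
    (hw : ∀ u, w u = g u (ys (n - m)) * LF μ q g ys n m (fun _ => 1) (update x (n - m) u))
    (hh : ∀ u, h u = LF μ q g ys n m f (update x (n - m) u) /
      LF μ q g ys n m (fun _ => 1) (update x (n - m) u)) :
    LF μ q g ys n (m + 1) f x / LF μ q g ys n (m + 1) (fun _ => 1) x =
      (∫ u, q (x (n - m - 1)) u * w u * h u ∂μ) / ∫ u, q (x (n - m - 1)) u * w u ∂μ := by
  rw [LF_succ, LF_succ]
  congr 1 <;> refine integral_congr_ae (ae_of_all _ fun u => ?_) <;> dsimp only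
  · rw [hw, hh]
    field_simp [(hA.LF_one_pos m _).ne']
  · rw [hw]

lemma abs_Psi_le_mul_of_lt (hA : IsStronglyMixing μ q g σm σp) [IsFiniteMeasure μ]
    (hf : Measurable f) {i k : ℕ}
    (hf_dep : ∀ x x' : ℕ → X, (∀ j, i ≤ j → j ≤ n → x j = x' j) → f x = f x')
    (hki : k < i) (hin : i ≤ n) {D : ℝ}
    (hD : ∀ xhat x, |Psi μ q g ys n (k + 1) xhat f x| ≤ D) (xhat x : ℕ → X) :
    |Psi μ q g ys n k xhat f x| ≤ (1 - σm / σp) * D := by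
  obtain ⟨m, hm⟩ : ∃ m, n - k = m + 1 := ⟨n - (k + 1), by omega⟩
  have hm₁ : n - m = k + 1 := by omega
  have hm₂ : n - m - 1 = k := by omega
  have hm₃ : n - (k + 1) = m := by omega
  have hpath : ∀ F : (ℕ → X) → ℝ, (∀ x x' : ℕ → X, (∀ j, i ≤ j → j ≤ n → x j = x' j) →
      F x = F x') → ∀ u, LF μ q g ys n m F (update xhat (k + 1) u) =
        LF μ q g ys n m F (update x (k + 1) u) := fun F hF u =>
    LF_congr hF m (fun j hij hjm => by obtain rfl : j = k + 1 := (by omega); simp) (by simp [hm₁])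
  have hpath_one := hpath (fun _ => 1) fun _ _ _ => rfl
  set w : X → ℝ := fun u => g u (ys (k + 1)) * LF μ q g ys n m (fun _ => 1) (update x (k + 1) u)
  set h : X → ℝ := fun u => LF μ q g ys n m f (update x (k + 1) u) /
    LF μ q g ys n m (fun _ => 1) (update x (k + 1) u)
  rw [Psi, hm, hA.LF_succ_div_eq (x := x) (w := w) (h := h) (by simp [w, hm₁]) (by simp [h, hm₁]),
    hA.LF_succ_div_eq (x := xhat) (w := w) (h := h) (by simp [w, hm₁, hpath_one])
      (by simp [h, hm₁, hpath_one, hpath f hf_dep]), hm₂]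
  have hLF_meas := fun F (hF : Measurable F) =>
    (measurable_LF (μ := μ) (ys := ys) (n := n) hA.measurable_q hA.measurable_g hF m).comp
      (measurable_update x (a := k + 1))
  refine abs_integral_div_sub_integral_div_le hA.pos
    hA.measurable_q.of_uncurry_left.aestronglyMeasurable
    hA.measurable_q.of_uncurry_left.aestronglyMeasurable
    (fun u => ⟨hA.le_q _ _, hA.q_le _ _⟩) (fun u => ⟨hA.le_q _ _, hA.q_le _ _⟩)
    (hA.integrable_g_mul_LF_one m _ x _)
    (fun u => mul_nonneg (hA.g_nonneg _ _) (hA.LF_one_pos m _).le)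
    (hA.integral_pos_of_g_pos_imp_pos (hA.integrable_g_mul_LF_one m _ x _)
      (fun u => mul_nonneg (hA.g_nonneg _ _) (hA.LF_one_pos m _).le) _
      fun u hu => mul_pos hu (hA.LF_one_pos m _))
    ((hLF_meas f hf).div (hLF_meas _ measurable_const)).aestronglyMeasurable (fun u v => ?_)
  simpa only [Psi, hm₃] using hD (update x (k + 1) v) (update x (k + 1) u)

end IsStronglyMixing

/-- `i - k` is natural subtraction, which realizes `max (i - k) 0`. -/
theorem psi_sup_bound
    (μ : Measure X) [IsProbabilityMeasure μ]
    (q : X → X → ℝ) (g : X → Y → ℝ) (ys : ℕ → Y) (n : ℕ)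
    (σm σp : ℝ)
    (hσm : 0 < σm)
    (hq_meas : Measurable (Function.uncurry q))
    (hq_low : ∀ a b, σm ≤ q a b) (hq_up : ∀ a b, q a b ≤ σp)
    (hg_meas : ∀ yv, Measurable fun x => g x yv)
    (hg_nonneg : ∀ x yv, 0 ≤ g x yv)
    (hg_bdd : ∀ yv, ∃ C, ∀ x, g x yv ≤ C)
    (hg_pos : ∀ yv, 0 < ∫ x, g x yv ∂μ)
    (i : ℕ) (hin : i ≤ n)
    (f : (ℕ → X) → ℝ) (hf_meas : Measurable f)
    (Cf : ℝ) (hCf : ∀ x, |f x| ≤ Cf)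
    (hf_dep : ∀ x x' : ℕ → X, (∀ j, i ≤ j → j ≤ n → x j = x' j) → f x = f x')
    (k : ℕ) (hkn : k ≤ n) (xhat : ℕ → X) :
    ∀ x : ℕ → X, |Psi μ q g ys n k xhat f x| ≤ 2 * (1 - σm / σp) ^ (i - k) * Cf := by
  have hA : IsStronglyMixing μ q g σm σp :=
    ⟨hσm, hq_meas, hq_low, hq_up, hg_meas, hg_nonneg, hg_bdd, hg_pos⟩
  induction hkn using Nat.decreasingInduction generalizing xhat with
  | self => simpa [Nat.sub_eq_zero_of_le hin] using hA.abs_Psi_le_two_mul hCf n xhat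
  | of_succ k _ ih =>
    intro x
    rcases le_or_gt i k with hik | hki
    · simpa [Nat.sub_eq_zero_of_le hik] using hA.abs_Psi_le_two_mul hCf k xhat x
    calc |Psi μ q g ys n k xhat f x|
        ≤ (1 - σm / σp) * (2 * (1 - σm / σp) ^ (i - (k + 1)) * Cf) :=
          hA.abs_Psi_le_mul_of_lt hf_meas hf_dep hki hin ih xhat x
      _ = 2 * (1 - σm / σp) ^ (i - k) * Cf := by
          rw [show i - k = i - (k + 1) + 1 by omega, pow_succ]
          ring
end
end

section
/- (Lemma A.4.) Assume (A1). Let 1 ≤ k ≤ n, let W_k : X × X → [0, ∞) be a bounded measurable function and let χ be any probability measure on 𝒳^{⊗k} (in particular, the weighted particle approximation φ^N_{ν,0:k−1|k−1}). Then for all x_{0:k} ∈ X^{k+1}, W_k(x_{k−1}, x_k) · L_k⋯L_{n−1}(x_k, X^{n+1}) / ∫_{X^k} L_{k−1}⋯L_{n−1}(x'_{k−1}, X^{n+1}) χ(dx'_{0:k−1}) ≤ ‖W_k‖_∞ / (μg(y_k) (1 − ρ) σ₋), where ‖W_k‖_∞ := sup_{x,x'} W_k(x, x'), μg(y) := ∫_X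 g(x, y) μ(dx) and ρ = 1 − σ₋/σ₊. (The left-hand side is the Radon–Nikodým derivative dμ^N_{k|n}/dη^N_k of the particle filter when χ = φ^N_{ν,0:k−1|k−1}.) -/
/- Lemma A.4 of Olsson, Cappé, Douc, Moulines: under (A1), for any bounded
measurable weight function `W_k` and any probability measure `χ` on the path
space (in particular the weighted particle approximation `φ^N_{ν,0:k−1|k−1}`),
the Radon–Nikodým derivative `dμ^N_{k|n}/dη^N_k`, namely
`W_k(x_{k−1}, x_k) L_k⋯L_{n−1}(x_k, X^{n+1}) / χ(L_{k−1}⋯L_{n−1}(·, X^{n+1}))`,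
is bounded by `‖W_k‖_∞ / (μg(y_k)(1−ρ)σ₋)`. -/

open MeasureTheory

noncomputable section

variable {X : Type*} [MeasurableSpace X] {Y : Type*}

/-- The total mass `L_k ⋯ L_{n-1}(x_k, X^{n+1})`, which depends on `x_{0:k}`
only through `x_k`. -/
def Lmass (μ : Measure X) (q : X → X → ℝ) (g : X → Y → ℝ) (ys : ℕ → Y) (n k : ℕ) (xk : X) : ℝ :=
  LF μ q g ys n (n - k) (fun _ => 1) (fun _ => xk)

lemma LF_one_eq (μ : Measure X) (q : X → X → ℝ) (g : X → Y → ℝ) (ys : ℕ → Y) (n : ℕ) :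
    ∀ (m : ℕ) (y : ℕ → X),
      LF μ q g ys n m (fun _ => 1) y
        = LF μ q g ys n m (fun _ => 1) (fun _ => y (n - m)) := by
  intro m
  induction m with
  | zero => intro y; simp [LF]
  | succ m ih =>
      intro y
      simp only [LF]
      congr 1
      funext x'
      rw [ih (Function.update y (n - m) x'),
        ih (Function.update (fun _ => y (n - (m + 1))) (n - m) x')]
      simp [Function.update_self, Nat.sub_sub]

lemma LF_succ_apply (μ : Measure X) (q : X → X → ℝ) (g : X → Y → ℝ) (ys : ℕ → Y)
    (n m : ℕ) (z : X) :
    LF μ q g ys n (m + 1) (fun _ => 1) (fun _ => z)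
      = ∫ x', g x' (ys (n - m)) * q z x' * LF μ q g ys n m (fun _ => 1) (fun _ => x') ∂μ := by
  simp only [LF]
  congr 1
  funext x'
  rw [LF_one_eq]
  simp [Function.update_self]

lemma LFc_props (μ : Measure X) [IsProbabilityMeasure μ]
    (q : X → X → ℝ) (g : X → Y → ℝ) (ys : ℕ → Y) (n : ℕ)
    (σm σp : ℝ) (hσm : 0 < σm)
    (hq_meas : Measurable (Function.uncurry q))
    (hq_low : ∀ a b, σm ≤ q a b) (hq_up : ∀ a b, q a b ≤ σp)
    (hg_meas : ∀ yv, Measurable fun x => g x yv)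
    (hg_nonneg : ∀ x yv, 0 ≤ g x yv)
    (hg_bdd : ∀ yv, ∃ C, ∀ x, g x yv ≤ C)
    (hg_pos : ∀ yv, 0 < ∫ x, g x yv ∂μ) :
    ∀ m : ℕ,
      Measurable (fun x => LF μ q g ys n m (fun _ => 1) (fun _ => x)) ∧
      (∃ C, 0 ≤ C ∧ ∀ x, LF μ q g ys n m (fun _ => 1) (fun _ => x) ≤ C) ∧
      (∀ x, 0 < LF μ q g ys n m (fun _ => 1) (fun _ => x)) ∧
      (∀ x x', LF μ q g ys n m (fun _ => 1) (fun _ => x)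
          ≤ (σp / σm) * LF μ q g ys n m (fun _ => 1) (fun _ => x')) := by
  have hne : Nonempty X := by
    by_contra h
    rw [not_nonempty_iff] at h
    have h1 : μ Set.univ = 1 := measure_univ
    rw [Set.univ_eq_empty_iff.mpr h, measure_empty] at h1
    exact zero_ne_one h1
  obtain ⟨x0⟩ := hne
  have hσmp : σm ≤ σp := (hq_low x0 x0).trans (hq_up x0 x0)
  have hσp : 0 < σp := hσm.trans_le hσmp
  intro m
  induction m with
  | zero =>
      refine ⟨measurable_const, ⟨1, by norm_num, fun x => by simp [LF]⟩,
        fun x => by simp [LF], fun x x' => ?_⟩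
      have h1 : (1 : ℝ) ≤ σp / σm := (one_le_div hσm).2 hσmp
      simpa [LF] using h1
  | succ m ih =>
      obtain ⟨hmeas, ⟨C, hC0, hCb⟩, hpos, hcomp⟩ := ih
      set F : X → ℝ := fun x => LF μ q g ys n m (fun _ => 1) (fun _ => x) with hF
      have hFnn : ∀ x, 0 ≤ F x := fun x => (hpos x).le
      obtain ⟨Cg, hCg⟩ := hg_bdd (ys (n - m))
      have hCg0 : 0 ≤ Cg := (hg_nonneg x0 _).trans (hCg x0)
      have hqnn : ∀ a b, 0 ≤ q a b := fun a b => hσm.le.trans (hq_low a b)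
      have hint : ∀ z, Integrable (fun x' => g x' (ys (n - m)) * q z x' * F x') μ := by
        intro z
        refine Integrable.mono' (integrable_const (Cg * σp * C)) ?_ ?_
        · exact (((hg_meas _).mul (hq_meas.comp measurable_prodMk_left)).mul hmeas).aestronglyMeasurable
        · refine ae_of_all _ fun x' => ?_
          rw [Real.norm_eq_abs, abs_of_nonneg (mul_nonneg (mul_nonneg (hg_nonneg _ _) (hqnn z x')) (hFnn x'))]
          exact mul_le_mul (mul_le_mul (hCg x') (hq_up z x') (hqnn z x') hCg0)
            (hCb x') (hFnn x') (mul_nonneg hCg0 hσp.le)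
      have hrw : ∀ z, LF μ q g ys n (m + 1) (fun _ => 1) (fun _ => z)
          = ∫ x', g x' (ys (n - m)) * q z x' * F x' ∂μ :=
        fun z => LF_succ_apply μ q g ys n m z
      refine ⟨?_, ⟨Cg * σp * C, mul_nonneg (mul_nonneg hCg0 hσp.le) hC0, fun z => ?_⟩,
        fun z => ?_, fun x x' => ?_⟩
      · have hj : StronglyMeasurable (fun p : X × X => g p.2 (ys (n - m)) * q p.1 p.2 * F p.2) :=
          ((((hg_meas _).comp measurable_snd).mul hq_meas).mul
            (hmeas.comp measurable_snd)).stronglyMeasurable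
        have := (hj.integral_prod_right' (ν := μ)).measurable
        simpa only [hrw] using this
      · rw [hrw]
        calc ∫ x', g x' (ys (n - m)) * q z x' * F x' ∂μ
            ≤ ∫ _x', Cg * σp * C ∂μ := by
              refine integral_mono (hint z) (integrable_const _) fun x' => ?_
              exact mul_le_mul (mul_le_mul (hCg x') (hq_up z x') (hqnn z x') hCg0)
                (hCb x') (hFnn x') (mul_nonneg hCg0 hσp.le)
          _ = Cg * σp * C := by simp
      · rw [hrw]
        have hG : 0 < ∫ x, g x (ys (n - m)) ∂μ := hg_pos _
        have hc : 0 < σm * ((σm / σp) * F z) :=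
          mul_pos hσm (mul_pos (div_pos hσm hσp) (hpos z))
        have hlow : σm * ((σm / σp) * F z) * (∫ x, g x (ys (n - m)) ∂μ)
            ≤ ∫ x', g x' (ys (n - m)) * q z x' * F x' ∂μ := by
          rw [← integral_const_mul]
          have hgInt : Integrable (fun x' => g x' (ys (n - m))) μ := by
            refine Integrable.mono' (integrable_const Cg) (hg_meas _).aestronglyMeasurable
              (ae_of_all _ fun x' => ?_)
            rw [Real.norm_eq_abs, abs_of_nonneg (hg_nonneg _ _)]
            exact hCg x'
          refine integral_mono (hgInt.const_mul _) (hint z) fun x' => ?_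
          have h1 : (σm / σp) * F z ≤ F x' := by
            calc (σm / σp) * F z ≤ (σm / σp) * ((σp / σm) * F x') :=
                  mul_le_mul_of_nonneg_left (hcomp z x') (div_nonneg hσm.le hσp.le)
              _ = F x' := by field_simp
          calc σm * ((σm / σp) * F z) * g x' (ys (n - m))
              ≤ q z x' * F x' * g x' (ys (n - m)) :=
                mul_le_mul_of_nonneg_right
                  (mul_le_mul (hq_low z x') h1
                    (mul_nonneg (div_nonneg hσm.le hσp.le) (hFnn z)) (hqnn z x'))
                  (hg_nonneg _ _)
            _ = g x' (ys (n - m)) * q z x' * F x' := by ring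
        calc (0 : ℝ) < σm * ((σm / σp) * F z) * (∫ x, g x (ys (n - m)) ∂μ) := mul_pos hc hG
          _ ≤ _ := hlow
      · rw [hrw, hrw]
        calc ∫ y, g y (ys (n - m)) * q x y * F y ∂μ
            ≤ ∫ y, (σp / σm) * (g y (ys (n - m)) * q x' y * F y) ∂μ := by
              refine integral_mono (hint x) ((hint x').const_mul _) fun y => ?_
              have hq' : q x y ≤ (σp / σm) * q x' y := by
                refine (hq_up x y).trans ?_
                calc σp = (σp / σm) * σm := by field_simp
                  _ ≤ (σp / σm) * q x' y :=
                    mul_le_mul_of_nonneg_left (hq_low x' y) (div_nonneg hσp.le hσm.le)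
              calc g y (ys (n - m)) * q x y * F y
                  ≤ g y (ys (n - m)) * ((σp / σm) * q x' y) * F y :=
                    mul_le_mul_of_nonneg_right
                      (mul_le_mul_of_nonneg_left hq' (hg_nonneg _ _)) (hFnn y)
                _ = (σp / σm) * (g y (ys (n - m)) * q x' y * F y) := by ring
          _ = (σp / σm) * ∫ y, g y (ys (n - m)) * q x' y * F y ∂μ := integral_const_mul _ _

lemma LFc_succ_lower (μ : Measure X) [IsProbabilityMeasure μ]
    (q : X → X → ℝ) (g : X → Y → ℝ) (ys : ℕ → Y) (n : ℕ)
    (σm σp : ℝ) (hσm : 0 < σm)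
    (hq_meas : Measurable (Function.uncurry q))
    (hq_low : ∀ a b, σm ≤ q a b) (hq_up : ∀ a b, q a b ≤ σp)
    (hg_meas : ∀ yv, Measurable fun x => g x yv)
    (hg_nonneg : ∀ x yv, 0 ≤ g x yv)
    (hg_bdd : ∀ yv, ∃ C, ∀ x, g x yv ≤ C)
    (hg_pos : ∀ yv, 0 < ∫ x, g x yv ∂μ) (m : ℕ) :
    ∀ z x0 : X,
      σm * ((σm / σp) * LF μ q g ys n m (fun _ => 1) (fun _ => x0)) *
          (∫ x, g x (ys (n - m)) ∂μ)
        ≤ LF μ q g ys n (m + 1) (fun _ => 1) (fun _ => z) := by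
  obtain ⟨hmeas, ⟨C, hC0, hCb⟩, hpos, hcomp⟩ :=
    LFc_props μ q g ys n σm σp hσm hq_meas hq_low hq_up hg_meas hg_nonneg hg_bdd hg_pos m
  set F : X → ℝ := fun x => LF μ q g ys n m (fun _ => 1) (fun _ => x) with hF
  have hFnn : ∀ x, 0 ≤ F x := fun x => (hpos x).le
  obtain ⟨Cg, hCg⟩ := hg_bdd (ys (n - m))
  have hne : Nonempty X := by
    by_contra h
    rw [not_nonempty_iff] at h
    have h1 : μ Set.univ = 1 := measure_univ
    rw [Set.univ_eq_empty_iff.mpr h, measure_empty] at h1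
    exact zero_ne_one h1
  obtain ⟨xw⟩ := hne
  have hσmp : σm ≤ σp := (hq_low xw xw).trans (hq_up xw xw)
  have hσp : 0 < σp := hσm.trans_le hσmp
  have hCg0 : 0 ≤ Cg := (hg_nonneg xw _).trans (hCg xw)
  have hqnn : ∀ a b, 0 ≤ q a b := fun a b => hσm.le.trans (hq_low a b)
  intro z x0
  have hint : Integrable (fun x' => g x' (ys (n - m)) * q z x' * F x') μ := by
    refine Integrable.mono' (integrable_const (Cg * σp * C)) ?_ ?_
    · exact (((hg_meas _).mul (hq_meas.comp measurable_prodMk_left)).mul hmeas).aestronglyMeasurable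
    · refine ae_of_all _ fun x' => ?_
      rw [Real.norm_eq_abs, abs_of_nonneg (mul_nonneg (mul_nonneg (hg_nonneg _ _) (hqnn z x')) (hFnn x'))]
      exact mul_le_mul (mul_le_mul (hCg x') (hq_up z x') (hqnn z x') hCg0)
        (hCb x') (hFnn x') (mul_nonneg hCg0 hσp.le)
  rw [LF_succ_apply μ q g ys n m z, ← integral_const_mul]
  have hgInt : Integrable (fun x' => g x' (ys (n - m))) μ := by
    refine Integrable.mono' (integrable_const Cg) (hg_meas _).aestronglyMeasurable
      (ae_of_all _ fun x' => ?_)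
    rw [Real.norm_eq_abs, abs_of_nonneg (hg_nonneg _ _)]
    exact hCg x'
  refine integral_mono (hgInt.const_mul _) hint fun x' => ?_
  have h1 : (σm / σp) * F x0 ≤ F x' := by
    calc (σm / σp) * F x0 ≤ (σm / σp) * ((σp / σm) * F x') :=
          mul_le_mul_of_nonneg_left (hcomp x0 x') (div_nonneg hσm.le hσp.le)
      _ = F x' := by field_simp
  calc σm * ((σm / σp) * F x0) * g x' (ys (n - m))
      ≤ q z x' * F x' * g x' (ys (n - m)) :=
        mul_le_mul_of_nonneg_right
          (mul_le_mul (hq_low z x') h1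
            (mul_nonneg (div_nonneg hσm.le hσp.le) (hFnn x0)) (hqnn z x'))
          (hg_nonneg _ _)
    _ = g x' (ys (n - m)) * q z x' * F x' := by ring

/-- **Lemma A.4.** Assume (A1). Let `1 ≤ k ≤ n`, let `W` be a bounded (by `CW`)
nonnegative measurable function on `X²` and let `χ` be any probability measure
on the path space. Then for all `x_{k-1}, x_k`,
`W(x_{k−1}, x_k) L_k⋯L_{n−1}(x_k, X^{n+1}) / ∫ L_{k−1}⋯L_{n−1}(x'_{k−1}, X^{n+1}) χ(dx')
  ≤ ‖W‖_∞ / (μg(y_k)(1−ρ)σ₋)`, where `ρ = 1 − σ₋/σ₊`. -/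
theorem radon_nikodym_derivative_bound
    (μ : Measure X) [IsProbabilityMeasure μ]
    (q : X → X → ℝ) (g : X → Y → ℝ) (ys : ℕ → Y) (n : ℕ)
    (σm σp : ℝ)
    (hσm : 0 < σm)
    (hq_meas : Measurable (Function.uncurry q))
    (hq_low : ∀ a b, σm ≤ q a b) (hq_up : ∀ a b, q a b ≤ σp)
    (hg_meas : ∀ yv, Measurable fun x => g x yv)
    (hg_nonneg : ∀ x yv, 0 ≤ g x yv)
    (hg_bdd : ∀ yv, ∃ C, ∀ x, g x yv ≤ C)
    (hg_pos : ∀ yv, 0 < ∫ x, g x yv ∂μ)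
    (k : ℕ) (hk1 : 1 ≤ k) (hkn : k ≤ n)
    (W : X → X → ℝ) (hW_meas : Measurable (Function.uncurry W))
    (hW_nonneg : ∀ a b, 0 ≤ W a b)
    (CW : ℝ) (hCW : ∀ a b, W a b ≤ CW)
    (χ : Measure (ℕ → X)) [IsProbabilityMeasure χ] :
    ∀ xkm xk : X,
      W xkm xk * Lmass μ q g ys n k xk /
          (∫ xp, Lmass μ q g ys n (k - 1) (xp (k - 1)) ∂χ) ≤
        CW / ((∫ z, g z (ys k) ∂μ) * (1 - (1 - σm / σp)) * σm) := by
  intro xkm xk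
  have hne : Nonempty X := by
    by_contra h
    rw [not_nonempty_iff] at h
    have h1 : μ Set.univ = 1 := measure_univ
    rw [Set.univ_eq_empty_iff.mpr h, measure_empty] at h1
    exact zero_ne_one h1
  obtain ⟨xw⟩ := hne
  have hσmp : σm ≤ σp := (hq_low xw xw).trans (hq_up xw xw)
  have hσp : 0 < σp := hσm.trans_le hσmp
  obtain ⟨hmeas, ⟨C, hC0, hCb⟩, hpos, hcomp⟩ :=
    LFc_props μ q g ys n σm σp hσm hq_meas hq_low hq_up hg_meas hg_nonneg hg_bdd hg_pos (n - k)
  obtain ⟨hmeas', ⟨C', hC'0, hC'b⟩, hpos', _⟩ :=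
    LFc_props μ q g ys n σm σp hσm hq_meas hq_low hq_up hg_meas hg_nonneg hg_bdd hg_pos (n - k + 1)
  set F : X → ℝ := fun x => LF μ q g ys n (n - k) (fun _ => 1) (fun _ => x) with hFdef
  set F1 : X → ℝ := fun x => LF μ q g ys n (n - k + 1) (fun _ => 1) (fun _ => x) with hF1def
  have hnnk : n - (n - k) = k := by omega
  have hnk1 : n - (k - 1) = n - k + 1 := by omega
  set G : ℝ := ∫ z, g z (ys k) ∂μ with hGdef
  have hG : 0 < G := hg_pos (ys k)
  -- the denominator integrand is `F1 ∘ (eval at k-1)`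
  have hmass : ∀ z, Lmass μ q g ys n (k - 1) z = F1 z := by
    intro z
    simp only [Lmass, hF1def, hnk1]
  have hmassk : Lmass μ q g ys n k xk = F xk := rfl
  -- lower bound on F1
  have hlow : ∀ z, σm * ((σm / σp) * F xk) * G ≤ F1 z := by
    intro z
    have := LFc_succ_lower μ q g ys n σm σp hσm hq_meas hq_low hq_up hg_meas hg_nonneg
      hg_bdd hg_pos (n - k) z xk
    rwa [hnnk] at this
  set c : ℝ := σm * ((σm / σp) * F xk) * G with hcdef
  have hc : 0 < c :=
    mul_pos (mul_pos hσm (mul_pos (div_pos hσm hσp) (hpos xk))) hG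
  -- the denominator
  have hDint : Integrable (fun xp : ℕ → X => F1 (xp (k - 1))) χ := by
    refine Integrable.mono' (integrable_const C') ?_ (ae_of_all _ fun xp => ?_)
    · exact (hmeas'.comp (measurable_pi_apply (k - 1))).aestronglyMeasurable
    · rw [Real.norm_eq_abs, abs_of_nonneg (hpos' _).le]
      exact hC'b _
  have hDrw : (∫ xp, Lmass μ q g ys n (k - 1) (xp (k - 1)) ∂χ)
      = ∫ xp, F1 (xp (k - 1)) ∂χ := by
    simp only [hmass]
  have hcD : c ≤ ∫ xp, F1 (xp (k - 1)) ∂χ := by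
    calc c = ∫ _xp : ℕ → X, c ∂χ := by simp
      _ ≤ ∫ xp, F1 (xp (k - 1)) ∂χ :=
        integral_mono (integrable_const c) hDint fun xp => hlow _
  have hD : 0 < ∫ xp, F1 (xp (k - 1)) ∂χ := hc.trans_le hcD
  have hCW0 : 0 ≤ CW := (hW_nonneg xw xw).trans (hCW xw xw)
  rw [hmassk, hDrw, show (1 : ℝ) - (1 - σm / σp) = σm / σp from by ring]
  calc W xkm xk * F xk / (∫ xp, F1 (xp (k - 1)) ∂χ)
      ≤ CW * F xk / c :=
        div_le_div₀ (mul_nonneg hCW0 (hpos xk).le)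
          (mul_le_mul_of_nonneg_right (hCW xkm xk) (hpos xk).le) hc hcD
    _ = CW / (G * (σm / σp) * σm) := by
        rw [hcdef]
        have hFne : F xk ≠ 0 := (hpos xk).ne'
        field_simp

end
end

section
/- (Initial-step Radon–Nikodým bound, inequality inside (A.9).) Assume (A1) and additionally that ν and ς are probability measures on 𝒳 with ν ≪ ς and νg(y₀) := ∫_X g(x, y₀) ν(dx) > 0, and set W₀(x) := g(x, y₀) dν/dς(x). Then for ς-almost every x₀ ∈ X, W₀(x₀) · L_0⋯L_{n−1}(x₀, X^{n+1}) / ν[g(·, y₀) L_0⋯L_{n−1}(X^{n+1})] ≤ ‖W₀‖_∞ / (νg(y₀)(1 − ρ)), where ν[g(·, y₀) L_0⋯L_{n−1}(X^{n+1})] := ∫_X g(x₀, y₀) L_0⋯L_{n−1}(x₀, X^{n+1}) ν(dx₀), ‖W₀‖_∞ := ess sup W₀, and ρ = 1 − σ₋/σ₊. -/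
/- Initial-step Radon–Nikodým bound (inside (A.9)) of Olsson, Cappé, Douc,
Moulines: with `W₀(x) = g(x,y₀) dν/dς(x)`, for ς-a.e. `x₀`,
`W₀(x₀) L_0⋯L_{n−1}(x₀, X^{n+1}) / ν[g(·,y₀) L_0⋯L_{n−1}(X^{n+1})]
  ≤ ‖W₀‖_∞ / (νg(y₀)(1−ρ))`. -/

open MeasureTheory

noncomputable section

variable {X : Type*} [MeasurableSpace X] {Y : Type*}

/-- The initial importance weight `W₀(x) = g(x, y₀) (dν/dς)(x)`. -/
def W0fun (ν ς : Measure X) (g : X → Y → ℝ) (ys : ℕ → Y) (x : X) : ℝ :=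
  g x (ys 0) * (ν.rnDeriv ς x).toReal

namespace A9Aux

lemma integrable_aux {μ : Measure X} [IsProbabilityMeasure μ] {f : X → ℝ} (hf : Measurable f)
    {C : ℝ} (h0 : ∀ x, 0 ≤ f x) (hC : ∀ x, f x ≤ C) : Integrable f μ :=
  (integrable_const C).mono' hf.aestronglyMeasurable
    (Filter.Eventually.of_forall fun x => by
      rw [Real.norm_eq_abs, abs_of_nonneg (h0 x)]; exact hC x)

variable (μ : Measure X) (q : X → X → ℝ) (g : X → Y → ℝ) (ys : ℕ → Y) (n : ℕ)

lemma LF_one_congr :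
    ∀ (m : ℕ) (w w' : ℕ → X), w (n - m) = w' (n - m) →
      LF μ q g ys n m (fun _ => 1) w = LF μ q g ys n m (fun _ => 1) w'
  | 0, w, w', _ => rfl
  | m + 1, w, w', h => by
      simp only [LF]
      refine integral_congr_ae (Filter.Eventually.of_forall fun x' => ?_)
      beta_reduce
      have h1 : w (n - m - 1) = w' (n - m - 1) := by rw [Nat.sub_sub]; exact h
      rw [h1, LF_one_congr (m) (Function.update w (n - m) x')
            (Function.update w' (n - m) x') (by simp)]

/-- One-variable version of the total mass. -/
def myL (m : ℕ) (z : X) : ℝ := LF μ q g ys n m (fun _ => 1) (fun _ => z)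

lemma myL_zero (z : X) : myL μ q g ys n 0 z = 1 := rfl

lemma myL_succ (m : ℕ) (z : X) :
    myL μ q g ys n (m + 1) z
      = ∫ x', g x' (ys (n - m)) * q z x' * myL μ q g ys n m x' ∂μ := by
  simp only [myL, LF]
  refine integral_congr_ae (Filter.Eventually.of_forall fun x' => ?_)
  beta_reduce
  rw [LF_one_congr μ q g ys n m (Function.update (fun _ => z) (n - m) x')
      (fun _ => x') (by simp)]

variable {σm σp : ℝ}

lemma myL_nonneg (hg : ∀ x yv, 0 ≤ g x yv) (hq : ∀ a b, 0 ≤ q a b) :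
    ∀ m z, 0 ≤ myL μ q g ys n m z
  | 0, z => by rw [myL_zero]; exact zero_le_one
  | m + 1, z => by
      rw [myL_succ]
      exact integral_nonneg fun x' =>
        mul_nonneg (mul_nonneg (hg _ _) (hq _ _)) (myL_nonneg hg hq m x')

lemma myL_meas [SFinite μ] (hq : Measurable (Function.uncurry q))
    (hg : ∀ yv, Measurable fun x => g x yv) :
    ∀ m, Measurable (myL μ q g ys n m)
  | 0 => measurable_const
  | m + 1 => by
      have hIH := myL_meas hq hg m
      have hq' : Measurable fun p : X × X => q p.1 p.2 := hq
      have h1 : Measurable fun p : X × X =>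
          g p.2 (ys (n - m)) * q p.1 p.2 * myL μ q g ys n m p.2 :=
        (((hg _).comp measurable_snd).mul hq').mul (hIH.comp measurable_snd)
      have h2 := (h1.stronglyMeasurable.integral_prod_right' (ν := μ)).measurable
      have hfun : myL μ q g ys n (m + 1)
          = fun z => ∫ x', g x' (ys (n - m)) * q z x' * myL μ q g ys n m x' ∂μ :=
        funext fun z => myL_succ μ q g ys n m z
      rw [hfun]; exact h2

lemma myL_bdd [IsProbabilityMeasure μ]
    (hq_meas : Measurable (Function.uncurry q))
    (hq0 : ∀ a b, 0 ≤ q a b) (hq_up : ∀ a b, q a b ≤ σp)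
    (hg_meas : ∀ yv, Measurable fun x => g x yv)
    (hg_nonneg : ∀ x yv, 0 ≤ g x yv)
    (hg_bdd : ∀ yv, ∃ C, ∀ x, g x yv ≤ C) :
    ∀ m, ∃ B, 0 ≤ B ∧ ∀ z, myL μ q g ys n m z ≤ B
  | 0 => ⟨1, zero_le_one, fun z => by rw [myL_zero]⟩
  | m + 1 => by
      obtain ⟨B, hB0, hB⟩ := myL_bdd hq_meas hq0 hq_up hg_meas hg_nonneg hg_bdd m
      obtain ⟨C, hC⟩ := hg_bdd (ys (n - m))
      set C' := max C 0 with hC'def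
      set σp' := max σp 0 with hσp'def
      have hC'0 : 0 ≤ C' := le_max_right _ _
      have hσp'0 : 0 ≤ σp' := le_max_right _ _
      refine ⟨C' * σp' * B, mul_nonneg (mul_nonneg hC'0 hσp'0) hB0, fun z => ?_⟩
      have hpt : ∀ x', g x' (ys (n - m)) * q z x' * myL μ q g ys n m x' ≤ C' * σp' * B := by
        intro x'
        have h1 : g x' (ys (n - m)) * q z x' ≤ C' * σp' :=
          mul_le_mul ((hC x').trans (le_max_left _ _)) ((hq_up z x').trans (le_max_left _ _))
            (hq0 z x') hC'0
        exact mul_le_mul h1 (hB x') (myL_nonneg μ q g ys n hg_nonneg hq0 m x')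
          (mul_nonneg hC'0 hσp'0)
      have hmeas : Measurable fun x' => g x' (ys (n - m)) * q z x' * myL μ q g ys n m x' :=
        (((hg_meas _).mul (hq_meas.comp (measurable_const.prodMk measurable_id))).mul
          (myL_meas μ q g ys n hq_meas hg_meas m))
      have h0 : ∀ x', 0 ≤ g x' (ys (n - m)) * q z x' * myL μ q g ys n m x' := fun x' =>
        mul_nonneg (mul_nonneg (hg_nonneg _ _) (hq0 _ _))
          (myL_nonneg μ q g ys n hg_nonneg hq0 m x')
      rw [myL_succ]
      calc ∫ x', g x' (ys (n - m)) * q z x' * myL μ q g ys n m x' ∂μ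
          ≤ ∫ _x', C' * σp' * B ∂μ :=
            integral_mono (integrable_aux hmeas h0 hpt) (integrable_const _)
              (fun x' => hpt x')
        _ = C' * σp' * B := by simp

lemma myL_sandwich [IsProbabilityMeasure μ]
    (hσm : 0 < σm)
    (hq_meas : Measurable (Function.uncurry q))
    (hq_low : ∀ a b, σm ≤ q a b) (hq_up : ∀ a b, q a b ≤ σp)
    (hg_meas : ∀ yv, Measurable fun x => g x yv)
    (hg_nonneg : ∀ x yv, 0 ≤ g x yv)
    (hg_bdd : ∀ yv, ∃ C, ∀ x, g x yv ≤ C)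
    (m : ℕ) (z : X) :
    σm * (∫ x', g x' (ys (n - m)) * myL μ q g ys n m x' ∂μ) ≤ myL μ q g ys n (m + 1) z ∧
    myL μ q g ys n (m + 1) z ≤ σp * (∫ x', g x' (ys (n - m)) * myL μ q g ys n m x' ∂μ) := by
  have hq0 : ∀ a b, 0 ≤ q a b := fun a b => (hσm.le.trans (hq_low a b))
  obtain ⟨B, hB0, hB⟩ := myL_bdd μ q g ys n hq_meas hq0 hq_up hg_meas hg_nonneg hg_bdd m
  obtain ⟨C, hC⟩ := hg_bdd (ys (n - m))
  have hC0 : ∀ x', 0 ≤ C := fun x' => le_trans (hg_nonneg x' _) (hC x')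
  set φ : X → ℝ := fun x' => g x' (ys (n - m)) * myL μ q g ys n m x' with hφdef
  have hφ0 : ∀ x', 0 ≤ φ x' := fun x' =>
    mul_nonneg (hg_nonneg _ _) (myL_nonneg μ q g ys n hg_nonneg hq0 m x')
  have hφC : ∀ x', φ x' ≤ C * B := fun x' =>
    mul_le_mul (hC x') (hB x') (myL_nonneg μ q g ys n hg_nonneg hq0 m x')
      (hC0 x')
  have hφmeas : Measurable φ := (hg_meas _).mul (myL_meas μ q g ys n hq_meas hg_meas m)
  have hφint : Integrable φ μ := integrable_aux hφmeas hφ0 hφC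
  have hmeas : Measurable fun x' => g x' (ys (n - m)) * q z x' * myL μ q g ys n m x' :=
    (((hg_meas _).mul (hq_meas.comp (measurable_const.prodMk measurable_id))).mul
      (myL_meas μ q g ys n hq_meas hg_meas m))
  have h0 : ∀ x', 0 ≤ g x' (ys (n - m)) * q z x' * myL μ q g ys n m x' := fun x' =>
    mul_nonneg (mul_nonneg (hg_nonneg _ _) (hq0 _ _))
      (myL_nonneg μ q g ys n hg_nonneg hq0 m x')
  have hlo : ∀ x', σm * φ x' ≤ g x' (ys (n - m)) * q z x' * myL μ q g ys n m x' := by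
    intro x'
    have : g x' (ys (n - m)) * q z x' * myL μ q g ys n m x' = q z x' * φ x' := by
      rw [hφdef]; ring
    rw [this]
    exact mul_le_mul_of_nonneg_right (hq_low z x') (hφ0 x')
  have hhi : ∀ x', g x' (ys (n - m)) * q z x' * myL μ q g ys n m x' ≤ σp * φ x' := by
    intro x'
    have : g x' (ys (n - m)) * q z x' * myL μ q g ys n m x' = q z x' * φ x' := by
      rw [hφdef]; ring
    rw [this]
    exact mul_le_mul_of_nonneg_right (hq_up z x') (hφ0 x')
  have hσp : 0 ≤ σp := hσm.le.trans ((hq_low z z).trans (hq_up z z))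
  have hint : Integrable (fun x' => g x' (ys (n - m)) * q z x' * myL μ q g ys n m x') μ := by
    refine integrable_aux (C := σp * (C * B)) hmeas h0 fun x' => (hhi x').trans ?_
    exact mul_le_mul_of_nonneg_left (hφC x') hσp
  constructor
  · rw [myL_succ, ← integral_const_mul]
    exact integral_mono (hφint.const_mul σm) hint hlo
  · rw [myL_succ, ← integral_const_mul]
    exact integral_mono hint (hφint.const_mul σp) hhi

lemma myL_ratio [IsProbabilityMeasure μ] [Nonempty X]
    (hσm : 0 < σm)
    (hq_meas : Measurable (Function.uncurry q))
    (hq_low : ∀ a b, σm ≤ q a b) (hq_up : ∀ a b, q a b ≤ σp)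
    (hg_meas : ∀ yv, Measurable fun x => g x yv)
    (hg_nonneg : ∀ x yv, 0 ≤ g x yv)
    (hg_bdd : ∀ yv, ∃ C, ∀ x, g x yv ≤ C) :
    ∀ (m : ℕ) (z z' : X), myL μ q g ys n m z ≤ σp / σm * myL μ q g ys n m z' := by
  have hσmp : σm ≤ σp := by
    obtain ⟨x⟩ := ‹Nonempty X›
    exact (hq_low x x).trans (hq_up x x)
  intro m z z'
  cases m with
  | zero =>
      rw [myL_zero, myL_zero, mul_one]
      exact (one_le_div hσm).mpr hσmp
  | succ m =>
      obtain ⟨_, hup⟩ := myL_sandwich μ q g ys n hσm hq_meas hq_low hq_up hg_meas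
        hg_nonneg hg_bdd m z
      obtain ⟨hlo, _⟩ := myL_sandwich μ q g ys n hσm hq_meas hq_low hq_up hg_meas
        hg_nonneg hg_bdd m z'
      have key : σp * (∫ x', g x' (ys (n - m)) * myL μ q g ys n m x' ∂μ)
          = σp / σm * (σm * (∫ x', g x' (ys (n - m)) * myL μ q g ys n m x' ∂μ)) := by
        field_simp
      calc myL μ q g ys n (m + 1) z
          ≤ σp * (∫ x', g x' (ys (n - m)) * myL μ q g ys n m x' ∂μ) := hup
        _ = σp / σm * (σm * (∫ x', g x' (ys (n - m)) * myL μ q g ys n m x' ∂μ)) := key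
        _ ≤ σp / σm * myL μ q g ys n (m + 1) z' :=
            mul_le_mul_of_nonneg_left hlo (div_nonneg (hσm.le.trans hσmp) hσm.le)

end A9Aux

open A9Aux

/-- **Initial-step Radon–Nikodým bound (inequality inside (A.9)).** Assume (A1),
`ν ≪ ς` and `νg(y₀) > 0`. Then for ς-a.e. `x₀`,
`W₀(x₀) L_0⋯L_{n−1}(x₀, X^{n+1}) / ∫ g(x,y₀) L_0⋯L_{n−1}(x, X^{n+1}) ν(dx)
  ≤ ‖W₀‖_∞ / (νg(y₀)(1−ρ))`, where `ρ = 1 − σ₋/σ₊` (so `1−ρ = σ₋/σ₊`) and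
`‖W₀‖_∞` is any ς-essential upper bound `CW0` of `W₀`. -/
theorem initial_radon_nikodym_derivative_bound
    (μ : Measure X) [IsProbabilityMeasure μ]
    (q : X → X → ℝ) (g : X → Y → ℝ) (ys : ℕ → Y) (n : ℕ)
    (σm σp : ℝ)
    (hσm : 0 < σm)
    (hq_meas : Measurable (Function.uncurry q))
    (hq_low : ∀ a b, σm ≤ q a b) (hq_up : ∀ a b, q a b ≤ σp)
    (hg_meas : ∀ yv, Measurable fun x => g x yv)
    (hg_nonneg : ∀ x yv, 0 ≤ g x yv)
    (hg_bdd : ∀ yv, ∃ C, ∀ x, g x yv ≤ C)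
    (hg_pos : ∀ yv, 0 < ∫ x, g x yv ∂μ)
    (ν ς : Measure X) [IsProbabilityMeasure ν] [IsProbabilityMeasure ς]
    (hνς : ν ≪ ς)
    (hνg : 0 < ∫ x, g x (ys 0) ∂ν)
    (CW0 : ℝ) (hCW0 : ∀ᵐ x ∂ς, W0fun ν ς g ys x ≤ CW0) :
    ∀ᵐ x₀ ∂ς,
      W0fun ν ς g ys x₀ * Lmass μ q g ys n 0 x₀ /
          (∫ x, g x (ys 0) * Lmass μ q g ys n 0 x ∂ν) ≤
        CW0 / ((∫ x, g x (ys 0) ∂ν) * (1 - (1 - σm / σp))) := by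
  have hX : Nonempty X := by
    by_contra h
    have h1 := measure_univ (μ := μ)
    rw [Set.univ_eq_empty_iff.mpr (not_nonempty_iff.mp h), measure_empty] at h1
    exact zero_ne_one h1
  have hσp : 0 < σp := hσm.trans_le
    ((hq_low (Classical.arbitrary X) (Classical.arbitrary X)).trans
      (hq_up (Classical.arbitrary X) (Classical.arbitrary X)))
  have hq0 : ∀ a b, 0 ≤ q a b := fun a b => hσm.le.trans (hq_low a b)
  have hLmass : Lmass μ q g ys n 0 = myL μ q g ys n n := rfl
  simp only [hLmass, sub_sub_cancel]
  set L : X → ℝ := myL μ q g ys n n with hLdef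
  have hL0 : ∀ x, 0 ≤ L x := fun x => myL_nonneg μ q g ys n hg_nonneg hq0 n x
  obtain ⟨B, hB0, hB⟩ := myL_bdd μ q g ys n hq_meas hq0 hq_up hg_meas hg_nonneg hg_bdd n
  obtain ⟨C, hC⟩ := hg_bdd (ys 0)
  have hC0 : 0 ≤ C := le_trans (hg_nonneg (Classical.arbitrary X) _) (hC _)
  have hLmeas : Measurable L := myL_meas μ q g ys n hq_meas hg_meas n
  set νg : ℝ := ∫ x, g x (ys 0) ∂ν with hνgdef
  set D : ℝ := ∫ x, g x (ys 0) * L x ∂ν with hDdef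
  -- the denominator lower bound
  have hDlow : ∀ x₀ : X, σm / σp * L x₀ * νg ≤ D := by
    intro x₀
    have hpt : ∀ x, g x (ys 0) * (σm / σp * L x₀) ≤ g x (ys 0) * L x := by
      intro x
      refine mul_le_mul_of_nonneg_left ?_ (hg_nonneg x _)
      have h1 := myL_ratio μ q g ys n hσm hq_meas hq_low hq_up hg_meas hg_nonneg hg_bdd n x₀ x
      have h2 : σm / σp * (σp / σm * L x) = L x := by field_simp
      calc σm / σp * L x₀ ≤ σm / σp * (σp / σm * L x) :=
            mul_le_mul_of_nonneg_left h1 (div_nonneg hσm.le hσp.le)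
        _ = L x := h2
    have hint1 : Integrable (fun x => g x (ys 0) * L x) ν :=
      integrable_aux ((hg_meas _).mul hLmeas)
        (fun x => mul_nonneg (hg_nonneg _ _) (hL0 x))
        (fun x => mul_le_mul (hC x) (hB x) (hL0 x) hC0)
    have hint2 : Integrable (fun x => g x (ys 0) * (σm / σp * L x₀)) ν :=
      (integrable_aux (hg_meas _) (fun x => hg_nonneg x _) hC).mul_const _
    calc σm / σp * L x₀ * νg = ∫ x, g x (ys 0) * (σm / σp * L x₀) ∂ν := by
          rw [integral_mul_const]; ring
      _ ≤ D := integral_mono hint2 hint1 hpt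
  -- nonnegativity of CW0
  have hW00 : ∀ x, 0 ≤ W0fun ν ς g ys x := fun x =>
    mul_nonneg (hg_nonneg _ _) ENNReal.toReal_nonneg
  have hCW00 : 0 ≤ CW0 := by
    haveI : (ae ς).NeBot := ae_neBot.mpr (IsProbabilityMeasure.ne_zero ς)
    obtain ⟨x, hx⟩ := hCW0.exists
    exact (hW00 x).trans hx
  filter_upwards [hCW0] with x₀ hx₀
  rcases (hL0 x₀).eq_or_lt with h0 | h0
  · rw [← h0, mul_zero, zero_div]
    exact div_nonneg hCW00 (mul_nonneg hνg.le (div_nonneg hσm.le hσp.le))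
  · set d : ℝ := σm / σp * νg with hddef
    have hd : 0 < d := mul_pos (div_pos hσm hσp) hνg
    have hdL : d * L x₀ ≤ D := by
      have : d * L x₀ = σm / σp * L x₀ * νg := by rw [hddef]; ring
      rw [this]; exact hDlow x₀
    calc W0fun ν ς g ys x₀ * L x₀ / D ≤ CW0 * L x₀ / (d * L x₀) :=
          div_le_div₀ (mul_nonneg hCW00 (hL0 x₀))
            (mul_le_mul_of_nonneg_right hx₀ (hL0 x₀)) (mul_pos hd h0) hdL
      _ = CW0 / d := mul_div_mul_right _ _ (ne_of_gt h0)
      _ = CW0 / (νg * (σm / σp)) := by rw [hddef, mul_comm]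


end
end
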